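/- arXiv:1702.04717 — 5 statements merged into one kernel-verified Lean document; each statement's English description precedes it below -/
import Mathlib

section
/- Let a₁, a₂, a₃, a₄ be real numbers each equal to 0 or 1, and let b₁,…,b₄ and c₁,…,c₄ be real numbers with bᵢ ≤ aᵢ ≤ cᵢ for each i ∈ {1,2,3,4}. Then a₁a₂a₃a₄ ≥ b₁c₂c₃c₄ + c₁b₂c₃c₄ + c₁c₂b₃c₄ + c₁c₂c₃b₄ − 3·c₁c₂c₃c₄. -/
theorem vector_sieve_inequality_four_dim
    (a₁ a₂ a₃ a₄ b₁ b₂ b₃ b₄ c₁ c₂ c₃ c₄ : ℝ)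
    (ha₁ : a₁ = 0 ∨ a₁ = 1) (ha₂ : a₂ = 0 ∨ a₂ = 1)
    (ha₃ : a₃ = 0 ∨ a₃ = 1) (ha₄ : a₄ = 0 ∨ a₄ = 1)
    (h₁ : b₁ ≤ a₁ ∧ a₁ ≤ c₁) (h₂ : b₂ ≤ a₂ ∧ a₂ ≤ c₂)
    (h₃ : b₃ ≤ a₃ ∧ a₃ ≤ c₃) (h₄ : b₄ ≤ a₄ ∧ a₄ ≤ c₄) :
    b₁ * c₂ * c₃ * c₄ + c₁ * b₂ * c₃ * c₄ + c₁ * c₂ * b₃ * c₄ + c₁ * c₂ * c₃ * b₄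
      - 3 * (c₁ * c₂ * c₃ * c₄) ≤ a₁ * a₂ * a₃ * a₄ := by
  obtain ⟨hb₁, hc₁⟩ := h₁
  obtain ⟨hb₂, hc₂⟩ := h₂
  obtain ⟨hb₃, hc₃⟩ := h₃
  obtain ⟨hb₄, hc₄⟩ := h₄
  have p₁ : (0:ℝ) ≤ a₁ := by rcases ha₁ with h|h <;> simp [h]
  have p₂ : (0:ℝ) ≤ a₂ := by rcases ha₂ with h|h <;> simp [h]
  have p₃ : (0:ℝ) ≤ a₃ := by rcases ha₃ with h|h <;> simp [h]
  have p₄ : (0:ℝ) ≤ a₄ := by rcases ha₄ with h|h <;> simp [h]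
  have q₁ : (0:ℝ) ≤ c₁ := p₁.trans hc₁
  have q₂ : (0:ℝ) ≤ c₂ := p₂.trans hc₂
  have q₃ : (0:ℝ) ≤ c₃ := p₃.trans hc₃
  have q₄ : (0:ℝ) ≤ c₄ := p₄.trans hc₄
  have k1 : (c₁ - a₁) * (c₂ * c₃ * c₄) ≤ (c₁ - b₁) * (c₂ * c₃ * c₄) :=
    mul_le_mul_of_nonneg_right (by linarith) (by positivity)
  have k2 : a₁ * ((c₂ - a₂) * (c₃ * c₄)) ≤ c₁ * ((c₂ - b₂) * (c₃ * c₄)) := by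
    apply mul_le_mul hc₁ (mul_le_mul_of_nonneg_right (by linarith) (by positivity))
      (mul_nonneg (by linarith) (by positivity)) q₁
  have k3 : (a₁ * a₂) * ((c₃ - a₃) * c₄) ≤ (c₁ * c₂) * ((c₃ - b₃) * c₄) := by
    apply mul_le_mul (mul_le_mul hc₁ hc₂ p₂ q₁)
      (mul_le_mul_of_nonneg_right (by linarith) q₄) (mul_nonneg (by linarith) q₄) (by positivity)
  have k4 : (a₁ * a₂ * a₃) * (c₄ - a₄) ≤ (c₁ * c₂ * c₃) * (c₄ - b₄) := by
    apply mul_le_mul (mul_le_mul (mul_le_mul hc₁ hc₂ p₂ q₁) hc₃ p₃ (by positivity))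
      (by linarith) (by linarith) (by positivity)
  nlinarith [k1, k2, k3, k4]
end

section
/- Fix c with 1 < c < 832/825 and set D = X^{1/11 − 0.001}, τ = X^{57/275 − c}. There is a constant C > 0 (depending on c) such that for all sufficiently large X the following holds. Let λ(d) be complex numbers defined for positive integers d ≤ D with |λ(d)| ≤ 1, and λ(d) = 0 whenever d is even or d is not squarefree, and define L(α,X) = Σ_{d ≤ D} λ(d) Σ_{X/2 < p ≤ X, p+2 ≡ 0 (mod d)} e(p^c α) log p, where p runs over primes. Then ∫_{−τ}^{τ} |L(α,X)|² dα ≤ C · X^{2−c} (log X)^6. -/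
/-!
Expanding the square and integrating term by term bounds the integral by `(log X)²` times the
sum, over pairs `(d, p)`, `(d', q)`, of `|∫_{-τ}^{τ} e((p^c - q^c) α) dα|`. Each such integral is
at most `min (2τ, 1 / (π |p^c - q^c|))`, and for `p, q > X / 2` the mean value theorem gives
`|p^c - q^c| ≥ (X / 2)^(c-1) |p - q|`. For fixed `p`, the `q` with `d' ∣ q + 2` form one residue
class mod `d'`: at most two of them lie within `d'` of `p`, and the others contribute a harmonic
sum `≪ X^(1-c) log X / d'`. Summing over `d' ≤ D` and over the `≪ X log X` pairs `(d, p)` gives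
`≪ X (log X)³ (τ D + X^(1-c) (log X)²)`, and `X τ D ≤ X^(2-c)` because `57/275 + 1/11 < 1`.
-/

open Real Finset intervalIntegral
open scoped Complex
open Complex (I)

noncomputable def expIntegralNorm (a b r : ℝ) : ℝ :=
  ‖∫ α in a..b, cexp (2 * (π : ℂ) * I * ((r * α : ℝ) : ℂ))‖

lemma expIntegralNorm_le_length (a b r : ℝ) : expIntegralNorm a b r ≤ |b - a| := by
  unfold expIntegralNorm
  simpa using norm_integral_le_of_norm_le_const (C := 1) fun α _ => by
    rw [Complex.norm_exp]; simp

lemma expIntegralNorm_le_inv {r : ℝ} (hr : r ≠ 0) (a b : ℝ) :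
    expIntegralNorm a b r ≤ (π * |r|)⁻¹ := by
  have hr' : 2 * (π : ℂ) * I * r ≠ 0 := by simp [hr, pi_ne_zero]
  have hunit : ∀ x : ℝ, ‖cexp (2 * π * I * r * x)‖ = 1 := fun x => by
    rw [Complex.norm_exp]; simp
  unfold expIntegralNorm
  simp_rw [Complex.ofReal_mul, ← mul_assoc]
  rw [integral_exp_mul_complex hr', norm_div]
  calc _ ≤ 2 / ‖2 * (π : ℂ) * I * r‖ := by
        gcongr
        exact (norm_sub_le _ _).trans (by rw [hunit, hunit]; norm_num)
    _ = (π * |r|)⁻¹ := by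
        simp only [norm_mul, Complex.norm_ofNat, Complex.norm_real, norm_eq_abs,
          abs_of_pos pi_pos, Complex.norm_I, mul_one]
        field_simp

lemma cexp_mul_conj_cexp (x y : ℝ) :
    cexp (2 * (π : ℂ) * I * x) * (starRingEnd ℂ) (cexp (2 * (π : ℂ) * I * y)) =
      cexp (2 * (π : ℂ) * I * ((x - y : ℝ) : ℂ)) := by
  rw [← Complex.exp_conj, ← Complex.exp_add]
  congr 1
  simp only [map_mul, Complex.conj_I, Complex.conj_ofReal, map_ofNat, Complex.ofReal_sub]
  ring

lemma integral_norm_sq_sum_le {ι : Type*} (s : Finset ι) (w : ι → ℂ) (f : ι → ℝ) {W : ℝ}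
    (hw : ∀ i ∈ s, ‖w i‖ ≤ W) (a b : ℝ) :
    ∫ α in a..b, ‖∑ i ∈ s, w i * cexp (2 * (π : ℂ) * I * ((f i * α : ℝ) : ℂ))‖ ^ 2 ≤
      W ^ 2 * ∑ i ∈ s, ∑ j ∈ s, expIntegralNorm a b (f i - f j) := by
  set E : ℝ → ℝ → ℂ := fun r α => cexp (2 * (π : ℂ) * I * ((r * α : ℝ) : ℂ))
  have hE : ∀ r, Continuous (E r) := fun r => by fun_prop
  have hexpand : ∀ α, ((‖∑ i ∈ s, w i * E (f i) α‖ ^ 2 : ℝ) : ℂ) =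
      ∑ i ∈ s, ∑ j ∈ s, w i * (starRingEnd ℂ) (w j) * E (f i - f j) α := by
    intro α
    rw [Complex.ofReal_pow, ← Complex.mul_conj', map_sum, sum_mul_sum]
    refine sum_congr rfl fun i _ => sum_congr rfl fun j _ => ?_
    simp only [E, map_mul, sub_mul, ← cexp_mul_conj_cexp]
    ring
  have hint : ((∫ α in a..b, ‖∑ i ∈ s, w i * E (f i) α‖ ^ 2 : ℝ) : ℂ) =
      ∑ i ∈ s, ∑ j ∈ s, w i * (starRingEnd ℂ) (w j) * ∫ α in a..b, E (f i - f j) α := by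
    rw [← intervalIntegral.integral_ofReal]
    simp_rw [hexpand]
    have hterm : ∀ i j, Continuous fun α => w i * (starRingEnd ℂ) (w j) * E (f i - f j) α :=
      fun i j => continuous_const.mul (hE _)
    rw [integral_finsetSum fun i _ =>
      (continuous_finsetSum _ fun j _ => hterm i j).intervalIntegrable _ _]
    refine sum_congr rfl fun i _ => ?_
    rw [integral_finsetSum fun j _ => (hterm i j).intervalIntegrable _ _]
    exact sum_congr rfl fun j _ => integral_const_mul _ _
  calc _ ≤ ‖((∫ α in a..b, ‖∑ i ∈ s, w i * E (f i) α‖ ^ 2 : ℝ) : ℂ)‖ := by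
        rw [Complex.norm_real]; exact le_abs_self _
    _ ≤ ∑ i ∈ s, ∑ j ∈ s, W ^ 2 * expIntegralNorm a b (f i - f j) := by
        rw [hint]
        refine (norm_sum_le _ _).trans (sum_le_sum fun i hi => ?_)
        refine (norm_sum_le _ _).trans (sum_le_sum fun j hj => ?_)
        rw [norm_mul, norm_mul, RCLike.norm_conj, sq]
        exact mul_le_mul_of_nonneg_right
          (mul_le_mul (hw i hi) (hw j hj) (norm_nonneg _) ((norm_nonneg _).trans (hw i hi)))
          (norm_nonneg _)
    _ = _ := by simp only [mul_sum]

lemma rpow_mul_sub_le_rpow_sub_rpow {c a b : ℝ} (hc : 1 ≤ c) (ha : 0 < a) (hab : a ≤ b) :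
    a ^ (c - 1) * (b - a) ≤ b ^ c - a ^ c := by
  have hb : 0 < b := ha.trans_le hab
  have hmono : a ^ (c - 1) ≤ b ^ (c - 1) := rpow_le_rpow ha.le hab (by linarith)
  have hsplit : ∀ x : ℝ, 0 < x → x ^ c = x ^ (c - 1) * x := fun x hx => by
    rw [← rpow_add_one hx.ne', sub_add_cancel]
  rw [hsplit a ha, hsplit b hb]
  nlinarith

lemma rpow_mul_abs_sub_le_abs_rpow_sub_rpow {c Y x y : ℝ} (hc : 1 ≤ c) (hY : 0 < Y)
    (hx : Y ≤ x) (hy : Y ≤ y) : Y ^ (c - 1) * |x - y| ≤ |x ^ c - y ^ c| := by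
  wlog hxy : x ≤ y generalizing x y
  · rw [abs_sub_comm, abs_sub_comm (x ^ c)]
    exact this hy hx (le_of_not_ge hxy)
  rw [abs_sub_comm, abs_sub_comm (x ^ c), abs_of_nonneg (sub_nonneg.mpr hxy),
    abs_of_nonneg (sub_nonneg.mpr (rpow_le_rpow (hY.trans_le hx).le hxy (by linarith)))]
  calc Y ^ (c - 1) * (y - x) ≤ x ^ (c - 1) * (y - x) := by gcongr
    _ ≤ y ^ c - x ^ c := rpow_mul_sub_le_rpow_sub_rpow hc (hY.trans_le hx) hxy

lemma expIntegralNorm_rpow_sub_rpow_le {c Y x y : ℝ} (hc : 1 ≤ c) (hY : 0 < Y) (hx : Y ≤ x)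
    (hy : Y ≤ y) (hxy : x ≠ y) (a b : ℝ) :
    expIntegralNorm a b (x ^ c - y ^ c) ≤ (π * Y ^ (c - 1))⁻¹ / |x - y| := by
  have hsep := rpow_mul_abs_sub_le_abs_rpow_sub_rpow hc hY hx hy
  have hpos : 0 < Y ^ (c - 1) * |x - y| :=
    mul_pos (rpow_pos_of_pos hY _) (abs_pos.mpr (sub_ne_zero.mpr hxy))
  refine (expIntegralNorm_le_inv (abs_pos.mp (hpos.trans_le hsep)) a b).trans ?_
  rw [div_eq_mul_inv, ← mul_inv, mul_assoc]
  gcongr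

lemma sum_Icc_inv_le_one_add_log (n : ℕ) : ∑ k ∈ Icc 1 n, (k : ℝ)⁻¹ ≤ 1 + log n := by
  simpa only [harmonic_eq_sum_Icc, Rat.cast_sum, Rat.cast_inv, Rat.cast_natCast] using
    harmonic_le_one_add_log n

lemma sum_Icc_inv_le_one_add_log_of_le {n : ℕ} {X : ℝ} (hX : 1 ≤ X) (hn : (n : ℝ) ≤ X) :
    ∑ k ∈ Icc 1 n, (k : ℝ)⁻¹ ≤ 1 + log X := by
  refine (sum_Icc_inv_le_one_add_log n).trans ?_
  rcases n.eq_zero_or_pos with rfl | hn0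
  · simpa using log_nonneg hX
  · gcongr

lemma sum_le_of_injOn_of_modEq {ι : Type*} {Q : Finset ι} {φ : ι → ℕ} {F : ι → ℝ} {d K : ℕ}
    {A B : ℝ} (hd : 0 < d) (hA : 0 ≤ A) (hB : 0 ≤ B) (hφ : Set.InjOn φ Q)
    (hmod : ∀ q ∈ Q, ∀ q' ∈ Q, φ q ≡ φ q' [MOD d]) (hK : ∀ q ∈ Q, φ q ≤ K)
    (hFA : ∀ q ∈ Q, F q ≤ A) (hFB : ∀ q ∈ Q, d ≤ φ q → F q ≤ B / φ q) :
    ∑ q ∈ Q, F q ≤ A + B / d * (1 + log K) := by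
  rw [← sum_filter_add_sum_filter_not Q (fun q => φ q < d)]
  gcongr ?_ + ?_
  · have hcard : #{q ∈ Q | φ q < d} ≤ 1 := by
      refine card_le_one.mpr fun q hq q' hq' => ?_
      simp only [mem_filter] at hq hq'
      exact hφ hq.1 hq'.1 ((hmod q hq.1 q' hq'.1).eq_of_lt_of_lt hq.2 hq'.2)
    calc ∑ q ∈ Q with φ q < d, F q ≤ #{q ∈ Q | φ q < d} • A :=
          sum_le_card_nsmul _ _ _ fun q hq => hFA q (mem_filter.mp hq).1
      _ ≤ 1 • A := by gcongr
      _ = A := one_smul _ _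
  · have hdq : ∀ q ∈ Q, d ≤ φ q → 0 < φ q / d := fun q _ h => Nat.div_pos h hd
    calc ∑ q ∈ Q with ¬φ q < d, F q
        ≤ ∑ q ∈ Q with ¬φ q < d, B / d * ((φ q / d : ℕ) : ℝ)⁻¹ := by
          refine sum_le_sum fun q hq => ?_
          simp only [mem_filter, not_lt] at hq
          refine (hFB q hq.1 hq.2).trans ?_
          rw [← div_eq_mul_inv, div_div]
          gcongr
          · exact_mod_cast Nat.mul_pos hd (hdq q hq.1 hq.2)
          · exact_mod_cast Nat.mul_div_le (φ q) d
      _ = ∑ k ∈ image (fun q => φ q / d) {q ∈ Q | ¬φ q < d}, B / d * (k : ℝ)⁻¹ := by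
          rw [sum_image]
          intro q hq q' hq' h
          simp only [mem_coe, mem_filter] at hq hq' h
          refine hφ hq.1 hq'.1 ?_
          rw [← Nat.div_add_mod (φ q) d, ← Nat.div_add_mod (φ q') d, h, hmod q hq.1 q' hq'.1]
      _ ≤ ∑ k ∈ Icc 1 K, B / d * (k : ℝ)⁻¹ := by
          refine sum_le_sum_of_subset_of_nonneg ?_ fun _ _ _ => by positivity
          intro k hk
          simp only [mem_image, mem_filter, not_lt] at hk
          obtain ⟨q, ⟨hq, hdq'⟩, rfl⟩ := hk
          exact mem_Icc.mpr ⟨hdq q hq hdq', (Nat.div_le_self _ _).trans (hK q hq)⟩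
      _ ≤ B / d * (1 + log K) := by
          rw [← mul_sum]
          gcongr
          exact sum_Icc_inv_le_one_add_log K

lemma sum_le_of_modEq {Q : Finset ℕ} {F : ℕ → ℝ} {d n K : ℕ} {A B : ℝ} (hd : 0 < d)
    (hA : 0 ≤ A) (hB : 0 ≤ B) (hmod : ∀ q ∈ Q, ∀ q' ∈ Q, q ≡ q' [MOD d])
    (hK : ∀ q ∈ Q, q ≤ K) (hn : n ≤ K) (hFA : ∀ q ∈ Q, F q ≤ A)
    (hFB : ∀ q ∈ Q, q ≠ n → F q ≤ B / |(q : ℝ) - n|) :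
    ∑ q ∈ Q, F q ≤ 2 * (A + B / d * (1 + log K)) := by
  rw [← sum_filter_add_sum_filter_not Q (· ≤ n), two_mul]
  gcongr ?_ + ?_
  · refine sum_le_of_injOn_of_modEq (φ := (n - ·)) hd hA hB ?_ ?_ ?_
      (fun q hq => hFA q (mem_filter.mp hq).1) fun q hq hdq => ?_
    · intro q hq q' hq' h
      simp only [mem_coe, mem_filter] at hq hq' h
      omega
    · intro q hq q' hq'
      simp only [mem_filter] at hq hq'
      exact Nat.ModEq.sub_left hq.2 hq'.2 (hmod q hq.1 q' hq'.1)
    · intro q _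
      omega
    · simp only [mem_filter] at hq
      have hqn : (q : ℝ) ≤ n := by exact_mod_cast hq.2
      rw [Nat.cast_sub hq.2, ← abs_of_nonneg (sub_nonneg.mpr hqn), abs_sub_comm]
      exact hFB q hq.1 (by omega)
  · refine sum_le_of_injOn_of_modEq (φ := (· - n)) hd hA hB ?_ ?_ ?_
      (fun q hq => hFA q (mem_filter.mp hq).1) fun q hq hdq => ?_
    · intro q hq q' hq' h
      simp only [mem_coe, mem_filter] at hq hq' h
      omega
    · intro q hq q' hq'
      simp only [mem_filter, not_le] at hq hq'
      exact Nat.ModEq.sub_right hq.2.le hq'.2.le (hmod q hq.1 q' hq'.1)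
    · intro q hq
      have := hK q (mem_filter.mp hq).1
      omega
    · simp only [mem_filter, not_le] at hq
      have hnq : (n : ℝ) ≤ q := by exact_mod_cast hq.2.le
      rw [Nat.cast_sub hq.2.le, ← abs_of_nonneg (sub_nonneg.mpr hnq)]
      exact hFB q hq.1 (by omega)

lemma norm_mul_log_le {z : ℂ} (hz : ‖z‖ ≤ 1) {x X : ℝ} (hx : 1 ≤ x) (hxX : x ≤ X) :
    ‖z * (log x : ℂ)‖ ≤ log X := by
  rw [norm_mul, Complex.norm_real, norm_of_nonneg (log_nonneg hx), ← one_mul (log X)]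
  exact mul_le_mul hz (log_le_log (by linarith) hxX) (log_nonneg hx) zero_le_one

lemma sum_mul_sum_eq_sum_sigma {ι κ : Type*} (s : Finset ι) (t : ι → Finset κ) (a : ι → ℂ)
    (g h : κ → ℂ) :
    ∑ i ∈ s, a i * ∑ j ∈ t i, g j * h j = ∑ x ∈ s.sigma t, a x.1 * h x.2 * g x.2 := by
  rw [sum_sigma]
  simp_rw [mul_sum]
  exact sum_congr rfl fun i _ => sum_congr rfl fun j _ => by ring

noncomputable def primesDvdAddTwo (X : ℝ) (d : ℕ) : Finset ℕ :=
  (Icc 1 ⌊X⌋₊).filter fun p : ℕ => p.Prime ∧ X / 2 < (p : ℝ) ∧ d ∣ (p + 2)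

lemma lt_and_le_of_mem_primesDvdAddTwo {X : ℝ} {d p : ℕ} (hX : 0 ≤ X)
    (hp : p ∈ primesDvdAddTwo X d) : X / 2 < p ∧ (p : ℝ) ≤ X := by
  simp only [primesDvdAddTwo, mem_filter, mem_Icc] at hp
  exact ⟨hp.2.2.1, (Nat.cast_le.mpr hp.1.2).trans (Nat.floor_le hX)⟩

lemma card_primesDvdAddTwo_le (X : ℝ) (d : ℕ) :
    (#(primesDvdAddTwo X d) : ℝ) ≤ (⌊X⌋₊ + 2) / d := by
  have hcard : #(primesDvdAddTwo X d) ≤ #{x ∈ Ioc 0 (⌊X⌋₊ + 2) | d ∣ x} := by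
    refine card_le_card_of_injOn (· + 2) (fun p hp => ?_) fun p _ q _ h => by simpa using h
    simp only [primesDvdAddTwo, coe_filter, Set.mem_ofPred_eq, mem_Icc] at hp
    simp only [coe_filter, Set.mem_ofPred_eq, mem_Ioc]
    exact ⟨by omega, hp.2.2.2⟩
  rw [Nat.Ioc_filter_dvd_card_eq_div] at hcard
  calc (#(primesDvdAddTwo X d) : ℝ) ≤ ((⌊X⌋₊ + 2) / d : ℕ) := by exact_mod_cast hcard
    _ ≤ _ := by exact_mod_cast Nat.cast_div_le

lemma card_sigma_primesDvdAddTwo_le {X : ℝ} (hX : 1 ≤ X) {N : ℕ} (hN : (N : ℝ) ≤ X) :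
    (#((Icc 1 N).sigma (primesDvdAddTwo X)) : ℝ) ≤ (X + 2) * (1 + log X) := by
  rw [card_sigma, Nat.cast_sum]
  calc _ ≤ ∑ d ∈ Icc 1 N, (⌊X⌋₊ + 2 : ℝ) / d :=
        sum_le_sum fun d _ => card_primesDvdAddTwo_le X d
    _ = (⌊X⌋₊ + 2) * ∑ d ∈ Icc 1 N, (d : ℝ)⁻¹ := by simp only [mul_sum, div_eq_mul_inv]
    _ ≤ (X + 2) * (1 + log X) := by
        have hfloor : (⌊X⌋₊ : ℝ) ≤ X := Nat.floor_le (by linarith)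
        have := sum_Icc_inv_le_one_add_log_of_le hX hN
        gcongr

lemma sum_expIntegralNorm_primesDvdAddTwo_le {c X τ : ℝ} (hc : 1 ≤ c) (hX : 0 < X) (hτ : 0 ≤ τ)
    {d p : ℕ} (hd : 0 < d) (hp : X / 2 < p) (hpX : p ≤ X) :
    ∑ q ∈ primesDvdAddTwo X d, expIntegralNorm (-τ) τ ((p : ℝ) ^ c - (q : ℝ) ^ c) ≤
      2 * (2 * τ + (π * (X / 2) ^ (c - 1))⁻¹ / d * (1 + log X)) := by
  have hmem : ∀ q ∈ primesDvdAddTwo X d, q ≤ ⌊X⌋₊ ∧ X / 2 < q ∧ d ∣ q + 2 := fun q hq => by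
    simp only [primesDvdAddTwo, mem_filter, mem_Icc] at hq
    exact ⟨hq.1.2, hq.2.2⟩
  have hp1 : 1 ≤ p := by
    have : (0 : ℝ) < p := by linarith
    exact_mod_cast this
  have hpfloor : p ≤ ⌊X⌋₊ := Nat.le_floor hpX
  refine (sum_le_of_modEq (K := ⌊X⌋₊) (n := p) (A := 2 * τ)
    (B := (π * (X / 2) ^ (c - 1))⁻¹) hd (by linarith) (by positivity) ?_
    (fun q hq => (hmem q hq).1) hpfloor ?_ ?_).trans ?_
  · intro q hq q' hq'
    exact Nat.ModEq.add_right_cancel' 2 ((Nat.modEq_zero_iff_dvd.mpr (hmem q hq).2.2).trans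
      (Nat.modEq_zero_iff_dvd.mpr (hmem q' hq').2.2).symm)
  · intro q _
    simpa [← two_mul, abs_of_nonneg hτ] using expIntegralNorm_le_length (-τ) τ _
  · intro q hq hqp
    rw [abs_sub_comm]
    exact expIntegralNorm_rpow_sub_rpow_le hc (by linarith) hp.le (hmem q hq).2.1.le
      (by exact_mod_cast hqp.symm) _ _
  · have hlog : log ⌊X⌋₊ ≤ log X :=
      log_le_log (by exact_mod_cast hp1.trans hpfloor) (Nat.floor_le hX.le)
    gcongr

lemma sum_sigma_expIntegralNorm_le {c X τ : ℝ} (hc : 1 ≤ c) (hX : 1 ≤ X) (hτ : 0 ≤ τ)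
    {N p : ℕ} (hN : (N : ℝ) ≤ X) (hp : X / 2 < p) (hpX : p ≤ X) :
    ∑ y ∈ (Icc 1 N).sigma (primesDvdAddTwo X), expIntegralNorm (-τ) τ ((p : ℝ) ^ c - (y.2 : ℝ) ^ c)
      ≤ 4 * τ * N + 2 * (π * (X / 2) ^ (c - 1))⁻¹ * (1 + log X) ^ 2 := by
  set B := (π * (X / 2) ^ (c - 1))⁻¹
  have hB : 0 ≤ B := by positivity
  rw [sum_sigma]
  calc _ ≤ ∑ d ∈ Icc 1 N, 2 * (2 * τ + B / d * (1 + log X)) :=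
        sum_le_sum fun d hd => sum_expIntegralNorm_primesDvdAddTwo_le hc (by linarith) hτ
          (mem_Icc.mp hd).1 hp hpX
    _ = ∑ d ∈ Icc 1 N, (4 * τ + 2 * B * (1 + log X) * (d : ℝ)⁻¹) :=
        sum_congr rfl fun d _ => by ring
    _ = 4 * τ * N + 2 * B * (1 + log X) * ∑ d ∈ Icc 1 N, (d : ℝ)⁻¹ := by
        rw [sum_add_distrib, sum_const, ← mul_sum, Nat.card_Icc, nsmul_eq_mul]
        push_cast
        ring
    _ ≤ _ := by
        have := sum_Icc_inv_le_one_add_log_of_le hX hN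
        have : 0 ≤ 1 + log X := by linarith [log_nonneg hX]
        rw [sq, ← mul_assoc]
        gcongr

lemma mul_rpow_mul_le_rpow {c X : ℝ} (hX : 1 ≤ X) {N : ℕ}
    (hN : (N : ℝ) ≤ X ^ ((1 : ℝ) / 11 - 0.001)) : X * (X ^ (57 / 275 - c) * N) ≤ X ^ (2 - c) := by
  have hX0 : 0 < X := by linarith
  calc X * (X ^ (57 / 275 - c) * N)
        ≤ X ^ (1 : ℝ) * (X ^ (57 / 275 - c) * X ^ ((1 : ℝ) / 11 - 0.001)) := by
          rw [rpow_one]; gcongr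
    _ = X ^ (1 + (57 / 275 - c) + ((1 : ℝ) / 11 - 0.001)) := by
        rw [rpow_add hX0, rpow_add hX0, mul_assoc]
    _ ≤ X ^ (2 - c) := rpow_le_rpow_of_exponent_le hX (by norm_num; linarith)

lemma mul_inv_pi_mul_rpow_le {c X : ℝ} (hX : 0 < X) :
    X * (π * (X / 2) ^ (c - 1))⁻¹ ≤ 2 ^ c * X ^ (2 - c) := by
  have h2 : (2 : ℝ) ^ c = 2 ^ (c - 1) * 2 := by rw [← rpow_add_one two_ne_zero, sub_add_cancel]
  have hXc : X ^ (2 - c) = X / X ^ (c - 1) := by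
    rw [show 2 - c = 1 - (c - 1) by ring, rpow_sub hX, rpow_one]
  rw [div_rpow hX.le zero_le_two, h2, hXc]
  have : 0 < X ^ (c - 1) := rpow_pos_of_pos hX _
  have : 0 < (2 : ℝ) ^ (c - 1) := by positivity
  field_simp
  nlinarith [pi_gt_three]

lemma log_sq_mul_mul_le_rpow_mul_log_pow {c X : ℝ} (hX : 3 ≤ X) {N : ℕ}
    (hN : (N : ℝ) ≤ X ^ ((1 : ℝ) / 11 - 0.001)) :
    log X ^ 2 * ((X + 2) * (1 + log X) *
      (4 * X ^ (57 / 275 - c) * N + 2 * (π * (X / 2) ^ (c - 1))⁻¹ * (1 + log X) ^ 2)) ≤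
      (16 + 32 * 2 ^ c) * X ^ (2 - c) * log X ^ 6 := by
  have hlog : 1 ≤ log X := by
    rw [le_log_iff_exp_le (by linarith)]
    linarith [exp_one_lt_d9]
  have hτN := mul_rpow_mul_le_rpow (c := c) (by linarith) hN
  have hB := mul_inv_pi_mul_rpow_le (c := c) (by linarith : 0 < X)
  calc _ ≤ log X ^ 2 * ((2 * X) * (2 * log X) *
        (4 * X ^ (57 / 275 - c) * N + 2 * (π * (X / 2) ^ (c - 1))⁻¹ * (2 * log X) ^ 2)) := by
        gcongr <;> linarith
    _ = 16 * (X * (X ^ (57 / 275 - c) * N)) * log X ^ 3 +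
        32 * (X * (π * (X / 2) ^ (c - 1))⁻¹) * log X ^ 5 := by ring
    _ ≤ 16 * X ^ (2 - c) * log X ^ 6 + 32 * (2 ^ c * X ^ (2 - c)) * log X ^ 6 := by
        gcongr <;> norm_num
    _ = _ := by ring

theorem L_square_integral_near_zero_general (c : ℝ) (hc1 : 1 < c) :
    ∃ C : ℝ, 0 < C ∧ ∃ X₀ : ℝ, ∀ X : ℝ, X₀ ≤ X →
      ∀ lam : ℕ → ℂ,
        (∀ d : ℕ, ‖lam d‖ ≤ 1) →
        (∀ d : ℕ, (2 ∣ d ∨ ¬ Squarefree d) → lam d = 0) →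
        (∫ α in (-(X ^ (57 / 275 - c)))..(X ^ (57 / 275 - c)),
            ‖∑ d ∈ Finset.Icc 1 ⌊X ^ ((1 : ℝ) / 11 - 0.001)⌋₊, lam d *
                ∑ p ∈ (Finset.Icc 1 ⌊X⌋₊).filter
                    (fun p : ℕ => p.Prime ∧ X / 2 < (p : ℝ) ∧ d ∣ (p + 2)),
                  Complex.exp (2 * (Real.pi : ℂ) * Complex.I * (((p : ℝ) ^ c * α : ℝ) : ℂ)) *
                    (Real.log p : ℂ)‖ ^ 2) ≤
          C * X ^ (2 - c) * Real.log X ^ 6 := by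
  refine ⟨16 + 32 * 2 ^ c, by positivity, 3, fun X hX lam hlam _ => ?_⟩
  set τ := X ^ (57 / 275 - c)
  set N := ⌊X ^ ((1 : ℝ) / 11 - 0.001)⌋₊
  set σ := (Icc 1 N).sigma (primesDvdAddTwo X)
  have hN : (N : ℝ) ≤ X ^ ((1 : ℝ) / 11 - 0.001) := Nat.floor_le (by positivity)
  have hNX : (N : ℝ) ≤ X := hN.trans (rpow_le_self_of_one_le (by linarith) (by norm_num))
  have hmem : ∀ y ∈ σ, X / 2 < y.2 ∧ (y.2 : ℝ) ≤ X := fun y hy =>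
    lt_and_le_of_mem_primesDvdAddTwo (by linarith) (mem_sigma.mp hy).2
  calc _ = ∫ α in (-τ)..τ, ‖∑ y ∈ σ, lam y.1 * (log y.2 : ℂ) *
        cexp (2 * (π : ℂ) * I * (((y.2 : ℝ) ^ c * α : ℝ) : ℂ))‖ ^ 2 := by
        simp only [sum_mul_sum_eq_sum_sigma]; rfl
    _ ≤ log X ^ 2 * ∑ x ∈ σ, ∑ y ∈ σ, expIntegralNorm (-τ) τ ((x.2 : ℝ) ^ c - (y.2 : ℝ) ^ c) :=
        integral_norm_sq_sum_le _ _ _ (fun y hy => norm_mul_log_le (hlam _)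
          (by linarith [(hmem y hy).1]) (hmem y hy).2) _ _
    _ ≤ log X ^ 2 * (#σ * (4 * τ * N + 2 * (π * (X / 2) ^ (c - 1))⁻¹ * (1 + log X) ^ 2)) := by
        rw [← nsmul_eq_mul]
        gcongr
        exact sum_le_card_nsmul _ _ _ fun x hx => sum_sigma_expIntegralNorm_le hc1.le (by linarith)
          (by positivity) hNX (hmem x hx).1 (hmem x hx).2
    _ ≤ log X ^ 2 * ((X + 2) * (1 + log X) *
          (4 * τ * N + 2 * (π * (X / 2) ^ (c - 1))⁻¹ * (1 + log X) ^ 2)) := by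
        have := card_sigma_primesDvdAddTwo_le (by linarith) hNX
        gcongr
    _ ≤ _ := log_sq_mul_mul_le_rpow_mul_log_pow hX hN

theorem L_square_integral_near_zero (c : ℝ) (hc1 : 1 < c) (hc2 : c < 832 / 825) :
    ∃ C : ℝ, 0 < C ∧ ∃ X₀ : ℝ, ∀ X : ℝ, X₀ ≤ X →
      ∀ lam : ℕ → ℂ,
        (∀ d : ℕ, ‖lam d‖ ≤ 1) →
        (∀ d : ℕ, (2 ∣ d ∨ ¬ Squarefree d) → lam d = 0) →
        (∫ α in (-(X ^ (57 / 275 - c)))..(X ^ (57 / 275 - c)),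
            ‖∑ d ∈ Finset.Icc 1 ⌊X ^ ((1 : ℝ) / 11 - 0.001)⌋₊, lam d *
                ∑ p ∈ (Finset.Icc 1 ⌊X⌋₊).filter
                    (fun p : ℕ => p.Prime ∧ X / 2 < (p : ℝ) ∧ d ∣ (p + 2)),
                  Complex.exp (2 * (Real.pi : ℂ) * Complex.I * (((p : ℝ) ^ c * α : ℝ) : ℂ)) *
                    (Real.log p : ℂ)‖ ^ 2) ≤
          C * X ^ (2 - c) * Real.log X ^ 6 :=
  L_square_integral_near_zero_general c hc1
end

section
/- Fix c with 1 < c < 832/825 and set τ = X^{57/275 − c}. There is a constant C > 0 (depending on c) such that for all sufficiently large X, the integral I(α) = ∫_{X/2}^{X} e(α t^c) dt satisfies ∫_{−τ}^{τ} |I(α)|² dα ≤ C · X^{2−c} · log X. -/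
/-! The phase `α t ^ c` has monotone derivative of size at least `|α| c (X/2)^(c-1)` on
`[X/2, X]` (for `α < 0` pass to the complex conjugate), so the first-derivative test gives
`‖I(α)‖ ≪ 1 / (|α| X^(c-1))`, while trivially `‖I(α)‖ ≤ X/2`. The two bounds cross at
`|α| ≍ X^(-c)`, and integrating the minimum of their squares over the whole line already gives
`O(X^(2-c))`. -/

open Real intervalIntegral Set MeasureTheory
open scoped ComplexConjugate

noncomputable def e (y : ℝ) : ℂ := Complex.exp (2 * π * Complex.I * y)

lemma norm_e (y : ℝ) : ‖e y‖ = 1 := by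
  simp [e, Complex.norm_exp]

lemma e_neg (y : ℝ) : e (-y) = conj (e y) := by
  simp only [e, ← Complex.exp_conj, map_mul, Complex.conj_ofReal, Complex.conj_I, map_ofNat]
  push_cast
  ring_nf

lemma HasDerivAt.e_comp {f : ℝ → ℝ} {f' t : ℝ} (hf : HasDerivAt f f' t) :
    HasDerivAt (fun s => e (f s)) (e (f t) * (2 * π * Complex.I * f')) t :=
  (hf.ofReal_comp.const_mul (2 * π * Complex.I)).cexp

lemma norm_integral_e_neg {f : ℝ → ℝ} {a b : ℝ} (hab : a ≤ b) :
    ‖∫ t in a..b, e (-f t)‖ = ‖∫ t in a..b, e (f t)‖ := by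
  simp only [e_neg, integral_of_le hab, integral_conj, Complex.norm_conj]

lemma integral_e_eq_by_parts {f f' f'' : ℝ → ℝ} {a b : ℝ}
    (hf : ∀ t ∈ uIcc a b, HasDerivAt f (f' t) t)
    (hf' : ∀ t ∈ uIcc a b, HasDerivAt f' (f'' t) t) (hf''_cont : ContinuousOn f'' (uIcc a b))
    (hf'_ne : ∀ t ∈ uIcc a b, f' t ≠ 0) :
    ∫ t in a..b, e (f t) = (e (f b) / f' b - e (f a) / f' a +
      ∫ t in a..b, ((f'' t / f' t ^ 2 : ℝ) : ℂ) * e (f t)) / (2 * π * Complex.I) := by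
  have hf'_cont : ContinuousOn f' (uIcc a b) :=
    fun t ht => (hf' t ht).differentiableAt.continuousAt.continuousWithinAt
  have hr'_cont : ContinuousOn (fun t => -f'' t / f' t ^ 2) (uIcc a b) :=
    hf''_cont.neg.div (hf'_cont.pow 2) fun t ht => pow_ne_zero 2 (hf'_ne t ht)
  have hibp := integral_mul_deriv_eq_deriv_mul
    (u := fun t => (((f' t)⁻¹ : ℝ) : ℂ)) (u' := fun t => ((-f'' t / f' t ^ 2 : ℝ) : ℂ))
    (v := fun t => e (f t)) (v' := fun t => e (f t) * (2 * π * Complex.I * f' t))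
    (fun t ht => ((hf' t ht).inv (hf'_ne t ht)).ofReal_comp) (fun t ht => (hf t ht).e_comp)
    (Complex.continuous_ofReal.comp_continuousOn hr'_cont).intervalIntegrable
    (ContinuousOn.intervalIntegrable fun t ht =>
      ((hf t ht).e_comp.continuousAt.continuousWithinAt).mul
        (continuousOn_const.mul (Complex.continuous_ofReal.comp_continuousOn hf'_cont) t ht))
  have hcancel : ∫ t in a..b, e (f t) = (∫ t in a..b,
      ((f' t)⁻¹ : ℝ) * (e (f t) * (2 * π * Complex.I * f' t))) / (2 * π * Complex.I) := by
    rw [← intervalIntegral.integral_div]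
    refine integral_congr fun t ht => ?_
    have : (f' t : ℂ) ≠ 0 := Complex.ofReal_ne_zero.2 (hf'_ne t ht)
    push_cast
    field_simp
  rw [hcancel, hibp]
  simp only [Complex.ofReal_neg, neg_mul, intervalIntegral.integral_neg,
    Complex.ofReal_inv, div_eq_mul_inv]
  ring

/-- The first-derivative test, cf. Titchmarsh, *The Theory of the Riemann Zeta-Function*,
Lemma 4.2. -/
theorem norm_integral_e_le_of_le_deriv {f f' f'' : ℝ → ℝ} {a b m : ℝ} (hab : a ≤ b)
    (hm : 0 < m) (hf : ∀ t ∈ Icc a b, HasDerivAt f (f' t) t)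
    (hf' : ∀ t ∈ Icc a b, HasDerivAt f' (f'' t) t) (hf''_cont : ContinuousOn f'' (Icc a b))
    (hmf' : ∀ t ∈ Icc a b, m ≤ f' t) (hf''_nonneg : ∀ t ∈ Icc a b, 0 ≤ f'' t) :
    ‖∫ t in a..b, e (f t)‖ ≤ 1 / (π * m) := by
  rw [← uIcc_of_le hab] at hf hf' hf''_cont hmf' hf''_nonneg
  have hf'_pos : ∀ t ∈ uIcc a b, 0 < f' t := fun t ht => hm.trans_le (hmf' t ht)
  have hf'_cont : ContinuousOn f' (uIcc a b) :=
    fun t ht => (hf' t ht).differentiableAt.continuousAt.continuousWithinAt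
  have hvar : ∫ t in a..b, f'' t / f' t ^ 2 = (f' a)⁻¹ - (f' b)⁻¹ := by
    have := integral_eq_sub_of_hasDerivAt (fun t ht => (hf' t ht).inv (hf'_pos t ht).ne')
      (hf''_cont.neg.div (hf'_cont.pow 2)
        fun t ht => (pow_pos (hf'_pos t ht) 2).ne').intervalIntegrable
    simp only [neg_div, intervalIntegral.integral_neg, Pi.inv_apply] at this
    linarith
  have htail :
      ‖∫ t in a..b, ((f'' t / f' t ^ 2 : ℝ) : ℂ) * e (f t)‖ ≤ (f' a)⁻¹ - (f' b)⁻¹ := by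
    calc _ ≤ ∫ t in a..b, ‖((f'' t / f' t ^ 2 : ℝ) : ℂ) * e (f t)‖ :=
          norm_integral_le_integral_norm hab
      _ = ∫ t in a..b, f'' t / f' t ^ 2 := by
          refine integral_congr fun t ht => ?_
          rw [norm_mul, norm_e, mul_one, Complex.norm_real, Real.norm_of_nonneg]
          exact div_nonneg (hf''_nonneg t ht) (sq_nonneg _)
      _ = _ := hvar
  have hboundary : ∀ t ∈ uIcc a b, ‖e (f t) / f' t‖ = (f' t)⁻¹ := by
    intro t ht
    rw [norm_div, norm_e, Complex.norm_real, Real.norm_of_nonneg (hf'_pos t ht).le, one_div]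
  have h2πI : ‖2 * π * Complex.I‖ = 2 * π := by simp [abs_of_pos pi_pos]
  have ha : a ∈ uIcc a b := left_mem_uIcc
  have hb : b ∈ uIcc a b := right_mem_uIcc
  rw [integral_e_eq_by_parts hf hf' hf''_cont fun t ht => (hf'_pos t ht).ne', norm_div, h2πI]
  calc _ ≤ ((f' b)⁻¹ + (f' a)⁻¹ + ((f' a)⁻¹ - (f' b)⁻¹)) / (2 * π) := by
        gcongr
        exact norm_add_le_of_le
          (norm_sub_le_of_le (hboundary b hb).le (hboundary a ha).le) htail
    _ = 1 / (π * f' a) := by field_simp; ring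
    _ ≤ 1 / (π * m) := by gcongr; exact hmf' a ha

lemma integral_le_div_of_le_div_sq {J : ℝ → ℝ} {B δ T : ℝ} (hJ : Continuous J)
    (hB : 0 ≤ B) (hδ : 0 < δ) (hδT : δ ≤ T) (hJB : ∀ α ∈ Icc δ T, J α ≤ B / α ^ 2) :
    ∫ α in δ..T, J α ≤ B / δ := by
  have hpos : ∀ α ∈ uIcc δ T, 0 < α := fun α hα => hδ.trans_le (uIcc_of_le hδT ▸ hα).1
  have hprim : ∀ α ∈ uIcc δ T, HasDerivAt (fun x => -B * x⁻¹) (B / α ^ 2) α :=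
    fun α hα => ((hasDerivAt_inv (hpos α hα).ne').const_mul (-B)).congr_deriv (by ring)
  have hcont : ContinuousOn (fun α => B / α ^ 2) (uIcc δ T) :=
    continuousOn_const.div (continuousOn_pow 2) fun α hα => pow_ne_zero 2 (hpos α hα).ne'
  calc ∫ α in δ..T, J α ≤ ∫ α in δ..T, B / α ^ 2 :=
        integral_mono_on hδT (hJ.intervalIntegrable _ _) hcont.intervalIntegrable hJB
    _ = B / δ - B / T := by
        rw [integral_eq_sub_of_hasDerivAt hprim hcont.intervalIntegrable]; ring
    _ ≤ B / δ := sub_le_self _ (div_nonneg hB (hδ.le.trans hδT))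

lemma integral_symm_le_of_le_of_le_div_sq {J : ℝ → ℝ} {A B δ τ : ℝ} (hJ : Continuous J)
    (hJ_nonneg : ∀ α, 0 ≤ J α) (hJA : ∀ α, J α ≤ A) (hJB : ∀ α ≠ 0, J α ≤ B / α ^ 2)
    (hδ : 0 < δ) (hτ : 0 ≤ τ) :
    ∫ α in -τ..τ, J α ≤ 2 * (δ * A + B / δ) := by
  set T := max τ δ
  have hB : 0 ≤ B := by simpa using (hJ_nonneg 1).trans (hJB 1 one_ne_zero)
  have hδT : δ ≤ T := le_max_right τ δ
  have hint : ∀ a b, IntervalIntegrable J volume a b := hJ.intervalIntegrable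
  have hmiddle : ∫ α in -δ..δ, J α ≤ 2 * δ * A := by
    calc ∫ α in -δ..δ, J α ≤ ∫ _ in -δ..δ, A :=
          integral_mono_on (by linarith) (hint _ _) intervalIntegrable_const fun α _ => hJA α
      _ = 2 * δ * A := by rw [intervalIntegral.integral_const, smul_eq_mul]; ring
  have hright : ∫ α in δ..T, J α ≤ B / δ :=
    integral_le_div_of_le_div_sq hJ hB hδ hδT fun α hα => hJB α (hδ.trans_le hα.1).ne'
  have hleft : ∫ α in -T..-δ, J α ≤ B / δ := by
    rw [← integral_comp_neg]
    refine integral_le_div_of_le_div_sq (hJ.comp continuous_neg) hB hδ hδT fun α hα => ?_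
    simpa using hJB (-α) (neg_ne_zero.2 (hδ.trans_le hα.1).ne')
  calc ∫ α in -τ..τ, J α ≤ ∫ α in -T..T, J α :=
        integral_mono_interval (neg_le_neg (le_max_left τ δ)) (by linarith) (le_max_left τ δ)
          (Filter.Eventually.of_forall hJ_nonneg) (hint _ _)
    _ = (∫ α in -T..-δ, J α) + (∫ α in -δ..δ, J α) + ∫ α in δ..T, J α := by
        rw [integral_add_adjacent_intervals (hint _ _) (hint _ _),
          integral_add_adjacent_intervals (hint _ _) (hint _ _)]
    _ ≤ 2 * (δ * A + B / δ) := by linarith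

noncomputable def I (c X α : ℝ) : ℂ := ∫ t in X / 2..X, e (α * t ^ c)

lemma norm_I_le_half (c : ℝ) {X : ℝ} (hX : 0 ≤ X) (α : ℝ) : ‖I c X α‖ ≤ X / 2 := by
  have := norm_integral_le_of_norm_le_const (a := X / 2) (b := X) (C := 1)
    (f := fun t => e (α * t ^ c)) fun t _ => (norm_e _).le
  rwa [one_mul, abs_of_nonneg (by linarith), sub_half] at this

lemma norm_I_neg (c : ℝ) {X : ℝ} (hX : 0 ≤ X) (α : ℝ) : ‖I c X (-α)‖ = ‖I c X α‖ := by
  simpa only [I, neg_mul] using norm_integral_e_neg (f := fun t => α * t ^ c) (by linarith)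

lemma continuous_I {c : ℝ} (hc : 0 ≤ c) (X : ℝ) : Continuous (I c X) :=
  continuous_parametric_intervalIntegral_of_continuous' (f := fun α t => e (α * t ^ c))
    (Complex.continuous_exp.comp (continuous_const.mul (Complex.continuous_ofReal.comp
      (continuous_fst.mul ((continuous_rpow_const hc).comp continuous_snd))))) _ _

lemma norm_I_le_of_pos {c X α : ℝ} (hc : 1 < c) (hX : 0 < X) (hα : 0 < α) :
    ‖I c X α‖ ≤ 1 / (π * (α * (c * (X / 2) ^ (c - 1)))) := by
  have hpos : ∀ t ∈ Icc (X / 2) X, t ≠ 0 := fun t ht => (half_pos hX).trans_le ht.1 |>.ne'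
  refine norm_integral_e_le_of_le_deriv (by linarith) (by positivity)
    (f' := fun t => α * (c * t ^ (c - 1)))
    (f'' := fun t => α * (c * ((c - 1) * t ^ (c - 1 - 1))))
    (fun t ht => ((hasDerivAt_rpow_const (Or.inl (hpos t ht))).const_mul α))
    (fun t ht => (((hasDerivAt_rpow_const (Or.inl (hpos t ht))).const_mul c).const_mul α))
    ?_ ?_ ?_
  · exact continuousOn_const.mul (continuousOn_const.mul (continuousOn_const.mul
      (continuousOn_id.rpow_const fun t ht => Or.inl (hpos t ht))))
  · intro t ht
    gcongr
    exact ht.1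
  · intro t ht
    have : 0 < t := (half_pos hX).trans_le ht.1
    have : 0 < c - 1 := by linarith
    positivity

lemma norm_I_sq_le {c X α : ℝ} (hc : 1 < c) (hX : 0 < X) (hα : α ≠ 0) :
    ‖I c X α‖ ^ 2 ≤ (1 / (π * (c * (X / 2) ^ (c - 1)))) ^ 2 / α ^ 2 := by
  have h : ‖I c X α‖ ≤ 1 / (π * (|α| * (c * (X / 2) ^ (c - 1)))) := by
    rcases hα.lt_or_gt with hneg | hpos
    · rw [← norm_I_neg c hX.le, abs_of_neg hneg]
      exact norm_I_le_of_pos hc hX (neg_pos.2 hneg)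
    · rw [abs_of_pos hpos]
      exact norm_I_le_of_pos hc hX hpos
  calc ‖I c X α‖ ^ 2 ≤ (1 / (π * (|α| * (c * (X / 2) ^ (c - 1))))) ^ 2 :=
        pow_le_pow_left₀ (norm_nonneg _) h 2
    _ = _ := by rw [← sq_abs α]; field_simp

theorem I_square_integral_near_zero_general (c : ℝ) (hc1 : 1 < c) :
    ∃ C : ℝ, 0 < C ∧ ∃ X₀ : ℝ, ∀ X : ℝ, X₀ ≤ X →
      (∫ α in (-(X ^ (57 / 275 - c)))..(X ^ (57 / 275 - c)),
          ‖∫ t in (X / 2)..X,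
              Complex.exp (2 * (Real.pi : ℂ) * Complex.I * ((α * t ^ c : ℝ) : ℂ))‖ ^ 2) ≤
        C * X ^ (2 - c) * Real.log X := by
  refine ⟨4 / (π * c * 2 ^ (2 - c)), by positivity, exp 1, fun X hX => ?_⟩
  have hX0 : 0 < X := (exp_pos 1).trans_le hX
  have hlog : 1 ≤ log X := (le_log_iff_exp_le hX0).2 hX
  have hc0 : 0 < c := by linarith
  set Y := X / 2
  have hY : 0 < Y := half_pos hX0
  set P := Y ^ (c - 1)
  -- `δ = 1 / (π c Y P)` is where the two pointwise bounds on `‖I c X α‖ ^ 2` meet.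
  have key := integral_symm_le_of_le_of_le_div_sq (J := fun α => ‖I c X α‖ ^ 2) (A := Y ^ 2)
    (B := (1 / (π * (c * P))) ^ 2) (δ := 1 / (π * c * Y * P)) (τ := X ^ (57 / 275 - c))
    ((continuous_I hc0.le X).norm.pow 2) (fun α => by positivity)
    (fun α => pow_le_pow_left₀ (norm_nonneg _) (norm_I_le_half c hX0.le α) 2)
    (fun α hα => norm_I_sq_le hc1 hX0 hα) (by positivity) (by positivity)
  have hYP : Y / P = X ^ (2 - c) / 2 ^ (2 - c) := by
    rw [← div_rpow hX0.le zero_le_two, show 2 - c = 1 - (c - 1) by ring, rpow_sub hY,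
      rpow_one]
  calc _ ≤ 2 * (1 / (π * c * Y * P) * Y ^ 2 + (1 / (π * (c * P))) ^ 2 / (1 / (π * c * Y * P))) :=
        key
    _ = 4 / (π * c) * (Y / P) := by field_simp; ring
    _ = 4 / (π * c * 2 ^ (2 - c)) * X ^ (2 - c) := by rw [hYP]; field_simp
    _ ≤ _ := le_mul_of_one_le_right (by positivity) hlog

theorem I_square_integral_near_zero (c : ℝ) (hc1 : 1 < c) (hc2 : c < 832 / 825) :
    ∃ C : ℝ, 0 < C ∧ ∃ X₀ : ℝ, ∀ X : ℝ, X₀ ≤ X →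
      (∫ α in (-(X ^ (57 / 275 - c)))..(X ^ (57 / 275 - c)),
          ‖∫ t in (X / 2)..X,
              Complex.exp (2 * (Real.pi : ℂ) * Complex.I * ((α * t ^ c : ℝ) : ℂ))‖ ^ 2) ≤
        C * X ^ (2 - c) * Real.log X :=
  I_square_integral_near_zero_general c hc1
end

section
/- Fix c with 1 < c < 832/825 and set D = X^{1/11 − 0.001}. There is a constant C > 0 (depending on c) such that for all sufficiently large X the following holds. Let λ(d) be complex numbers defined for positive integers d ≤ D with |λ(d)| ≤ 1, and λ(d) = 0 whenever d is even or d is not squarefree, and define L(t,X) = Σ_{d ≤ D} λ(d) Σ_{X/2 < p ≤ X, p+2 ≡ 0 (mod d)} e(p^c t) log p, where p runs over primes. Then ∫_{0}^{1} |L(t,X)|² dt ≤ C · X (log X)^5. -/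
open Real Finset intervalIntegral
open Filter Asymptotics
open scoped FourierTransform

/-!
Swapping the sums gives `L(t, X) = ∑_{X/2 < p ≤ X} W_p e(p^c t)` with
`W_p = log p · ∑_{d ≤ D, d ∣ p + 2} λ(d)`. Expanding the square, the diagonal contributes
`∑ |W_p|²`. Since `|p^c - q^c| ≥ (X/2)^{c-1} |p - q|`, an off-diagonal term is at most
`|W_p| |W_q| / (π (X/2)^{c-1} |p - q|)`, and the Hilbert-type bound
`∑_{p ≠ q ≤ N} a_p a_q / |p - q| ≤ 2 H_N ∑ a_p²` (with `H_N` the harmonic number) makes them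
at most `2 H_N / (π (X/2)^{c-1}) ≤ 1` times the diagonal once `X` is large, because `c > 1`.
Finally `|W_p| ≤ τ_D(p + 2) log X` with `τ_D(n) = #{d ≤ D : d ∣ n}`, and counting common
multiples gives `∑_{n ≤ N} τ_D(n + 2)² ≤ (N + 2) ∑_{d, e ≤ D} 1 / lcm(d, e) ≤ (N + 2) H_D³`.
-/

lemma sum_inv_le_harmonic_of_injOn {α : Type*} {s : Finset α} {g : α → ℕ} {N : ℕ}
    (hg : ∀ x ∈ s, g x ∈ Icc 1 N) (hinj : Set.InjOn g s) :
    ∑ x ∈ s, ((g x : ℝ))⁻¹ ≤ harmonic N := by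
  rw [harmonic_eq_sum_Icc, ← sum_image (f := fun k : ℕ => ((k : ℝ))⁻¹) hinj]
  push_cast
  exact sum_le_sum_of_subset_of_nonneg (image_subset_iff.2 hg) fun _ _ _ => by positivity

lemma harmonic_floor_rpow_le {X a : ℝ} (hX : 1 ≤ X) (ha₀ : 0 ≤ a) (ha₁ : a ≤ 1) :
    (harmonic ⌊X ^ a⌋₊ : ℝ) ≤ 1 + log X := by
  refine (harmonic_floor_le_one_add_log _ (one_le_rpow hX ha₀)).trans ?_
  rw [log_rpow (by linarith)]
  nlinarith [log_nonneg hX]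

lemma sum_erase_inv_abs_sub_le {S : Finset ℕ} {N p : ℕ} (hS : ∀ q ∈ S, q ≤ N) (hp : p ≤ N) :
    ∑ q ∈ S.erase p, |(p : ℝ) - q|⁻¹ ≤ 2 * harmonic N := by
  rw [← sum_filter_add_sum_filter_not _ (· < p), two_mul]
  gcongr
  · calc ∑ q ∈ (S.erase p).filter (· < p), |(p : ℝ) - q|⁻¹
        = ∑ q ∈ (S.erase p).filter (· < p), (((p - q : ℕ) : ℝ))⁻¹ := by
          refine sum_congr rfl fun q hq => ?_
          have hqp : q < p := (mem_filter.1 hq).2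
          rw [Nat.cast_sub hqp.le, abs_of_pos (sub_pos.2 (by exact_mod_cast hqp))]
      _ ≤ harmonic N := by
          refine sum_inv_le_harmonic_of_injOn (fun q hq => mem_Icc.2 ?_) fun a ha b hb hab => ?_
          · have := (mem_filter.1 hq).2
            omega
          · have := (mem_filter.1 ha).2
            have := (mem_filter.1 hb).2
            omega
  · calc ∑ q ∈ (S.erase p).filter (¬ · < p), |(p : ℝ) - q|⁻¹
        = ∑ q ∈ (S.erase p).filter (¬ · < p), (((q - p : ℕ) : ℝ))⁻¹ := by
          refine sum_congr rfl fun q hq => ?_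
          have hpq : ¬ q < p := (mem_filter.1 hq).2
          rw [Nat.cast_sub (not_lt.1 hpq), abs_sub_comm,
            abs_of_nonneg (sub_nonneg.2 (by exact_mod_cast not_lt.1 hpq))]
      _ ≤ harmonic N := by
          refine sum_inv_le_harmonic_of_injOn (fun q hq => mem_Icc.2 ?_) fun a ha b hb hab => ?_
          · obtain ⟨hq, hpq⟩ := mem_filter.1 hq
            have := ne_of_mem_erase hq
            have := hS q (mem_of_mem_erase hq)
            omega
          · have := (mem_filter.1 ha).2
            have := (mem_filter.1 hb).2
            omega

lemma sum_sum_erase_mul_div_abs_sub_le {S : Finset ℕ} {N : ℕ} (hS : ∀ p ∈ S, p ≤ N)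
    (a : ℕ → ℝ) :
    ∑ p ∈ S, ∑ q ∈ S.erase p, a p * a q / |(p : ℝ) - q| ≤ 2 * harmonic N * ∑ p ∈ S, a p ^ 2 := by
  have hswap : ∑ p ∈ S, ∑ q ∈ S.erase p, a q ^ 2 / |(p : ℝ) - q| =
      ∑ p ∈ S, ∑ q ∈ S.erase p, a p ^ 2 / |(p : ℝ) - q| := by
    refine (sum_comm' fun p q => ?_).trans
      (sum_congr rfl fun q _ => sum_congr rfl fun p _ => by rw [abs_sub_comm])
    simp only [mem_erase]
    tauto
  calc ∑ p ∈ S, ∑ q ∈ S.erase p, a p * a q / |(p : ℝ) - q|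
      ≤ ∑ p ∈ S, ∑ q ∈ S.erase p, (a p ^ 2 + a q ^ 2) / 2 / |(p : ℝ) - q| := by
        gcongr with p _ q _
        linarith [two_mul_le_add_sq (a p) (a q)]
    _ = (∑ p ∈ S, ∑ q ∈ S.erase p, a p ^ 2 / |(p : ℝ) - q| +
          ∑ p ∈ S, ∑ q ∈ S.erase p, a q ^ 2 / |(p : ℝ) - q|) / 2 := by
        rw [← sum_add_distrib, sum_div]
        refine sum_congr rfl fun p _ => ?_
        rw [← sum_add_distrib, sum_div]
        exact sum_congr rfl fun q _ => by ring
    _ = ∑ p ∈ S, a p ^ 2 * ∑ q ∈ S.erase p, |(p : ℝ) - q|⁻¹ := by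
        simp_rw [hswap, add_self_div_two, mul_sum, div_eq_mul_inv]
    _ ≤ ∑ p ∈ S, a p ^ 2 * (2 * harmonic N) := by
        gcongr with p hp
        exact sum_erase_inv_abs_sub_le hS (hS p hp)
    _ = 2 * harmonic N * ∑ p ∈ S, a p ^ 2 := by rw [mul_sum]; simp_rw [mul_comm]

lemma card_filter_dvd_add_le (N h k : ℕ) : (#{n ∈ Icc 1 N | k ∣ n + h} : ℝ) ≤ (N + h) / k := by
  calc (#{n ∈ Icc 1 N | k ∣ n + h} : ℝ) ≤ #{m ∈ Ioc 0 (N + h) | k ∣ m} := by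
        refine mod_cast card_le_card_of_injOn (· + h) (fun n hn => ?_) fun a _ b _ => ?_
        · simp only [coe_filter, mem_Icc, Set.mem_ofPred_eq, mem_Ioc] at hn ⊢
          exact ⟨⟨by omega, by omega⟩, hn.2⟩
        · exact Nat.add_right_cancel
    _ ≤ (N + h) / k := by
        rw [Nat.Ioc_filter_dvd_card_eq_div]
        exact_mod_cast Nat.cast_div_le

lemma sum_inv_filter_dvd_le {D g : ℕ} (hg : 0 < g) :
    ∑ d ∈ {d ∈ Icc 1 D | g ∣ d}, (d : ℝ)⁻¹ ≤ harmonic D / g := by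
  calc ∑ d ∈ {d ∈ Icc 1 D | g ∣ d}, (d : ℝ)⁻¹
      = (g : ℝ)⁻¹ * ∑ d ∈ {d ∈ Icc 1 D | g ∣ d}, ((d / g : ℕ) : ℝ)⁻¹ := by
        rw [mul_sum]
        refine sum_congr rfl fun d hd => ?_
        rw [Nat.cast_div (mem_filter.1 hd).2 (by positivity), inv_div, ← div_eq_inv_mul,
          div_div_cancel_left' (by positivity)]
    _ ≤ (g : ℝ)⁻¹ * harmonic D := by
        gcongr
        refine sum_inv_le_harmonic_of_injOn (fun d hd => ?_) fun a ha b hb hab => ?_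
        · obtain ⟨hd, hgd⟩ := mem_filter.1 hd
          rw [mem_Icc] at hd ⊢
          exact ⟨Nat.div_pos (Nat.le_of_dvd (by omega) hgd) hg, (Nat.div_le_self d g).trans hd.2⟩
        · exact (Nat.div_left_inj (mem_filter.1 ha).2 (mem_filter.1 hb).2).1 hab
    _ = harmonic D / g := inv_mul_eq_div _ _

lemma inv_lcm_le_sum_filter_dvd {D d : ℕ} (hd : d ∈ Icc 1 D) (e : ℕ) :
    ((d.lcm e : ℕ) : ℝ)⁻¹ ≤
      ∑ g ∈ Icc 1 D with g ∣ d ∧ g ∣ e, (g : ℝ) * ((d : ℝ)⁻¹ * (e : ℝ)⁻¹) := by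
  rw [mem_Icc] at hd
  have hgcd : d.gcd e ∈ {g ∈ Icc 1 D | g ∣ d ∧ g ∣ e} := mem_filter.2
    ⟨mem_Icc.2 ⟨Nat.gcd_pos_of_pos_left _ hd.1, (Nat.gcd_le_left _ hd.1).trans hd.2⟩,
      Nat.gcd_dvd_left d e, Nat.gcd_dvd_right d e⟩
  calc ((d.lcm e : ℕ) : ℝ)⁻¹ = (d.gcd e : ℕ) * ((d : ℝ)⁻¹ * (e : ℝ)⁻¹) := by
        have h := congrArg (Nat.cast : ℕ → ℝ) (Nat.gcd_mul_lcm d e)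
        push_cast at h
        rw [← mul_inv, ← h, mul_inv,
          mul_inv_cancel_left₀ (Nat.cast_ne_zero.2 (Nat.gcd_pos_of_pos_left _ hd.1).ne')]
    _ ≤ _ := single_le_sum (f := fun g : ℕ => (g : ℝ) * ((d : ℝ)⁻¹ * (e : ℝ)⁻¹))
        (fun g _ => by positivity) hgcd

lemma sum_sum_inv_lcm_le (D : ℕ) :
    ∑ d ∈ Icc 1 D, ∑ e ∈ Icc 1 D, ((d.lcm e : ℕ) : ℝ)⁻¹ ≤ harmonic D ^ 3 := by
  set F : ℕ → ℝ := fun g => ∑ d ∈ Icc 1 D with g ∣ d, (d : ℝ)⁻¹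
  have hF : ∀ g ∈ Icc 1 D, F g ≤ harmonic D / g := fun g hg =>
    sum_inv_filter_dvd_le (mem_Icc.1 hg).1
  have hF₀ : ∀ g, 0 ≤ F g := fun g => sum_nonneg fun d _ => by positivity
  calc ∑ d ∈ Icc 1 D, ∑ e ∈ Icc 1 D, ((d.lcm e : ℕ) : ℝ)⁻¹
      ≤ ∑ d ∈ Icc 1 D, ∑ e ∈ Icc 1 D,
          ∑ g ∈ Icc 1 D with g ∣ d ∧ g ∣ e, (g : ℝ) * ((d : ℝ)⁻¹ * (e : ℝ)⁻¹) := by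
        gcongr with d hd e
        exact inv_lcm_le_sum_filter_dvd hd e
    _ = ∑ g ∈ Icc 1 D, g * (F g * F g) := by
        simp_rw [F, sum_filter, sum_mul_sum, mul_sum, ite_zero_mul_ite_zero, mul_ite, mul_zero]
        exact (sum_congr rfl fun d _ => sum_comm).trans sum_comm
    _ ≤ ∑ g ∈ Icc 1 D, (g : ℝ) * ((harmonic D / g) * (harmonic D / g)) :=
        sum_le_sum fun g hg => mul_le_mul_of_nonneg_left
          (mul_le_mul (hF g hg) (hF g hg) (hF₀ g) ((hF₀ g).trans (hF g hg))) (by positivity)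
    _ = harmonic D ^ 2 * ∑ g ∈ Icc 1 D, (g : ℝ)⁻¹ := by
        rw [mul_sum]
        refine sum_congr rfl fun g hg => ?_
        have : (g : ℝ) ≠ 0 := Nat.cast_ne_zero.2 (by rw [mem_Icc] at hg; omega)
        field_simp
    _ = harmonic D ^ 3 := by
        rw [harmonic_eq_sum_Icc]
        push_cast
        ring

lemma sum_card_filter_dvd_sq_le (N D h : ℕ) :
    ∑ n ∈ Icc 1 N, (#{d ∈ Icc 1 D | d ∣ n + h} : ℝ) ^ 2 ≤ (N + h) * harmonic D ^ 3 := by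
  calc ∑ n ∈ Icc 1 N, (#{d ∈ Icc 1 D | d ∣ n + h} : ℝ) ^ 2
      = ∑ n ∈ Icc 1 N, ∑ d ∈ Icc 1 D, ∑ e ∈ Icc 1 D, if d.lcm e ∣ n + h then (1 : ℝ) else 0 := by
        refine sum_congr rfl fun n _ => ?_
        simp_rw [natCast_card_filter, sq, sum_mul_sum, ite_zero_mul_ite_zero, mul_one,
          Nat.lcm_dvd_iff]
    _ = ∑ d ∈ Icc 1 D, ∑ e ∈ Icc 1 D, (#{n ∈ Icc 1 N | d.lcm e ∣ n + h} : ℝ) := by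
        simp_rw [natCast_card_filter]
        rw [sum_comm]
        exact sum_congr rfl fun d _ => sum_comm
    _ ≤ ∑ d ∈ Icc 1 D, ∑ e ∈ Icc 1 D, (N + h : ℝ) / (d.lcm e : ℕ) := by
        gcongr with d _ e _
        exact card_filter_dvd_add_le N h _
    _ ≤ (N + h) * harmonic D ^ 3 := by
        simp_rw [div_eq_mul_inv, ← mul_sum]
        gcongr
        exact sum_sum_inv_lcm_le D

lemma sum_norm_sq_sum_filter_dvd_mul_log_le {S : Finset ℕ} {N : ℕ} (D h : ℕ) (hS : S ⊆ Icc 1 N)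
    {lam : ℕ → ℂ} (hlam : ∀ d, ‖lam d‖ ≤ 1) :
    ∑ p ∈ S, ‖(∑ d ∈ Icc 1 D with d ∣ p + h, lam d) * (log p : ℂ)‖ ^ 2 ≤
      log N ^ 2 * ((N + h) * harmonic D ^ 3) := by
  have hterm : ∀ p ∈ S, ‖(∑ d ∈ Icc 1 D with d ∣ p + h, lam d) * (log p : ℂ)‖ ^ 2 ≤
      (#{d ∈ Icc 1 D | d ∣ p + h} : ℝ) ^ 2 * log N ^ 2 := by
    intro p hp
    have hp := mem_Icc.1 (hS hp)
    have hsum : ‖∑ d ∈ Icc 1 D with d ∣ p + h, lam d‖ ≤ #{d ∈ Icc 1 D | d ∣ p + h} :=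
      (norm_sum_le _ _).trans ((sum_le_sum fun d _ => hlam d).trans (by simp))
    have hlog : |log p| ≤ log N := by
      rw [abs_of_nonneg (log_natCast_nonneg p)]
      exact log_le_log (by exact_mod_cast hp.1) (by exact_mod_cast hp.2)
    rw [← mul_pow, norm_mul, Complex.norm_real, norm_eq_abs]
    gcongr
  calc ∑ p ∈ S, ‖(∑ d ∈ Icc 1 D with d ∣ p + h, lam d) * (log p : ℂ)‖ ^ 2
      ≤ ∑ p ∈ S, (#{d ∈ Icc 1 D | d ∣ p + h} : ℝ) ^ 2 * log N ^ 2 := sum_le_sum hterm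
    _ ≤ ∑ n ∈ Icc 1 N, (#{d ∈ Icc 1 D | d ∣ n + h} : ℝ) ^ 2 * log N ^ 2 :=
        sum_le_sum_of_subset_of_nonneg hS fun _ _ _ => by positivity
    _ ≤ log N ^ 2 * ((N + h) * harmonic D ^ 3) := by
        rw [← sum_mul, mul_comm]
        gcongr
        exact sum_card_filter_dvd_sq_le N D h

lemma exp_two_pi_I_mul_eq_fourierChar (x : ℝ) : Complex.exp (2 * π * Complex.I * x) = 𝐞 x := by
  rw [fourierChar_apply]; push_cast; ring_nf

lemma fourierChar_mul_conj (x y : ℝ) :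
    (𝐞 x : ℂ) * starRingEnd ℂ (𝐞 y) = 𝐞 (x - y) := by
  rw [Circle.starRingEnd_addChar, ← Circle.coe_mul, ← AddChar.map_add_eq_mul, sub_eq_add_neg]

lemma integral_fourierChar_mul {β : ℝ} (hβ : β ≠ 0) :
    ∫ t in (0 : ℝ)..1, (𝐞 (β * t) : ℂ) = (𝐞 β - 1) / (2 * π * Complex.I * β) := by
  have hK : (2 * π * Complex.I * β : ℂ) ≠ 0 := by simp [hβ, pi_ne_zero]
  simp_rw [← exp_two_pi_I_mul_eq_fourierChar]
  push_cast
  simp_rw [← mul_assoc]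
  rw [integral_exp_mul_complex hK]
  simp

lemma norm_integral_fourierChar_mul_le {β : ℝ} (hβ : β ≠ 0) :
    ‖∫ t in (0 : ℝ)..1, (𝐞 (β * t) : ℂ)‖ ≤ (π * |β|)⁻¹ := by
  rw [integral_fourierChar_mul hβ, norm_div]
  have hnum : ‖(𝐞 β : ℂ) - 1‖ ≤ 2 :=
    (norm_sub_le _ _).trans (by rw [Circle.norm_coe, norm_one]; norm_num)
  have hden : ‖(2 * π * Complex.I * β : ℂ)‖ = 2 * (π * |β|) := by
    simp only [Complex.norm_mul, Complex.norm_ofNat, Complex.norm_real, norm_eq_abs,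
      abs_of_pos pi_pos, Complex.norm_I, mul_one]
    ring
  rw [hden, div_le_iff₀ (by positivity)]
  have : 0 < π * |β| := by positivity
  field_simp
  linarith

lemma integral_norm_sq_sum_fourierChar_le {ι : Type*} (s : Finset ι) (w : ι → ℂ) (β : ι → ℝ) :
    ∫ t in (0 : ℝ)..1, ‖∑ i ∈ s, w i * 𝐞 (β i * t)‖ ^ 2 ≤
      ∑ i ∈ s, ∑ j ∈ s, ‖w i‖ * ‖w j‖ * ‖∫ t in (0 : ℝ)..1, (𝐞 ((β i - β j) * t) : ℂ)‖ := by
  have hexpand : ∀ t : ℝ, ((‖∑ i ∈ s, w i * 𝐞 (β i * t)‖ ^ 2 : ℝ) : ℂ) =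
      ∑ i ∈ s, ∑ j ∈ s, w i * starRingEnd ℂ (w j) * 𝐞 ((β i - β j) * t) := by
    intro t
    rw [Complex.ofReal_pow, ← Complex.mul_conj', map_sum, sum_mul_sum]
    refine sum_congr rfl fun i _ => sum_congr rfl fun j _ => ?_
    rw [map_mul (starRingEnd ℂ), sub_mul, ← fourierChar_mul_conj]
    ring
  have hint : ∀ i j, IntervalIntegrable (fun t : ℝ => w i * starRingEnd ℂ (w j) *
      (𝐞 ((β i - β j) * t) : ℂ)) MeasureTheory.volume 0 1 := fun i j =>
    (by fun_prop : Continuous _).intervalIntegrable 0 1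
  have hint' : ∀ i, IntervalIntegrable (fun t : ℝ => ∑ j ∈ s, w i * starRingEnd ℂ (w j) *
      (𝐞 ((β i - β j) * t) : ℂ)) MeasureTheory.volume 0 1 := fun i =>
    (by fun_prop : Continuous _).intervalIntegrable 0 1
  calc ∫ t in (0 : ℝ)..1, ‖∑ i ∈ s, w i * 𝐞 (β i * t)‖ ^ 2
      = ‖∫ t in (0 : ℝ)..1, ((‖∑ i ∈ s, w i * 𝐞 (β i * t)‖ ^ 2 : ℝ) : ℂ)‖ := by
        rw [intervalIntegral.integral_ofReal, Complex.norm_real, norm_of_nonneg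
          (intervalIntegral.integral_nonneg zero_le_one fun t _ => by positivity)]
    _ = ‖∑ i ∈ s, ∑ j ∈ s, w i * starRingEnd ℂ (w j) *
          ∫ t in (0 : ℝ)..1, (𝐞 ((β i - β j) * t) : ℂ)‖ := by
        simp_rw [hexpand]
        rw [integral_finsetSum fun i _ => hint' i]
        simp_rw [integral_finsetSum fun j _ => hint _ j, integral_const_mul]
    _ ≤ _ := by
        refine (norm_sum_le _ _).trans (sum_le_sum fun i _ => (norm_sum_le _ _).trans ?_)
        simp

theorem integral_norm_sq_sum_fourierChar_le_of_spacing {S : Finset ℕ} {N : ℕ}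
    (hS : ∀ p ∈ S, p ≤ N) (w : ℕ → ℂ) {β : ℕ → ℝ} {M : ℝ} (hM : 0 < M)
    (hβ : ∀ p ∈ S, ∀ q ∈ S, M * |(p : ℝ) - q| ≤ |β p - β q|) :
    ∫ t in (0 : ℝ)..1, ‖∑ p ∈ S, w p * 𝐞 (β p * t)‖ ^ 2 ≤
      (1 + 2 * harmonic N / (π * M)) * ∑ p ∈ S, ‖w p‖ ^ 2 := by
  have hdiag : ∀ p, ‖w p‖ * ‖w p‖ * ‖∫ t in (0 : ℝ)..1, (𝐞 ((β p - β p) * t) : ℂ)‖ =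
      ‖w p‖ ^ 2 := fun p => by simp [sq]
  have hoff : ∀ p ∈ S, ∀ q ∈ S.erase p,
      ‖w p‖ * ‖w q‖ * ‖∫ t in (0 : ℝ)..1, (𝐞 ((β p - β q) * t) : ℂ)‖ ≤
        (π * M)⁻¹ * (‖w p‖ * ‖w q‖ / |(p : ℝ) - q|) := by
    intro p hp q hq
    obtain ⟨hqp, hq⟩ := mem_erase.1 hq
    have hpq : 0 < |(p : ℝ) - q| := abs_pos.2 (sub_ne_zero.2 (by exact_mod_cast hqp.symm))
    have hβpq : 0 < M * |(p : ℝ) - q| := mul_pos hM hpq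
    calc ‖w p‖ * ‖w q‖ * ‖∫ t in (0 : ℝ)..1, (𝐞 ((β p - β q) * t) : ℂ)‖
        ≤ ‖w p‖ * ‖w q‖ * (π * |β p - β q|)⁻¹ := by
          gcongr
          exact norm_integral_fourierChar_mul_le
            (abs_pos.1 (hβpq.trans_le (hβ p hp q hq)))
      _ ≤ ‖w p‖ * ‖w q‖ * (π * (M * |(p : ℝ) - q|))⁻¹ := by
          gcongr
          exact hβ p hp q hq
      _ = (π * M)⁻¹ * (‖w p‖ * ‖w q‖ / |(p : ℝ) - q|) := by ring
  calc ∫ t in (0 : ℝ)..1, ‖∑ p ∈ S, w p * 𝐞 (β p * t)‖ ^ 2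
      ≤ ∑ p ∈ S, ∑ q ∈ S, ‖w p‖ * ‖w q‖ * ‖∫ t in (0 : ℝ)..1, (𝐞 ((β p - β q) * t) : ℂ)‖ :=
        integral_norm_sq_sum_fourierChar_le S w β
    _ ≤ ∑ p ∈ S, (‖w p‖ ^ 2 + ∑ q ∈ S.erase p, (π * M)⁻¹ * (‖w p‖ * ‖w q‖ / |(p : ℝ) - q|)) := by
        refine sum_le_sum fun p hp => ?_
        rw [← add_sum_erase S _ hp, hdiag]
        exact add_le_add_right (sum_le_sum fun q hq => hoff p hp q hq) _
    _ ≤ ∑ p ∈ S, ‖w p‖ ^ 2 + (π * M)⁻¹ * (2 * harmonic N * ∑ p ∈ S, ‖w p‖ ^ 2) := by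
        rw [sum_add_distrib]
        simp_rw [← mul_sum]
        gcongr
        exact sum_sum_erase_mul_div_abs_sub_le hS _
    _ = (1 + 2 * harmonic N / (π * M)) * ∑ p ∈ S, ‖w p‖ ^ 2 := by ring

lemma mul_sub_le_rpow_sub_rpow {a x y c : ℝ} (ha : 0 < a) (hay : a ≤ y) (hyx : y ≤ x)
    (hc : 1 ≤ c) : a ^ (c - 1) * (x - y) ≤ x ^ c - y ^ c := by
  have hy : 0 < y := ha.trans_le hay
  have hpow : ∀ z : ℝ, 0 < z → z ^ c = z * z ^ (c - 1) := fun z hz => by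
    rw [← rpow_one_add' hz.le (by linarith), add_sub_cancel]
  have hyx' : y ^ (c - 1) ≤ x ^ (c - 1) := rpow_le_rpow hy.le hyx (by linarith)
  have hay' : a ^ (c - 1) ≤ y ^ (c - 1) := rpow_le_rpow ha.le hay (by linarith)
  rw [hpow x (hy.trans_le hyx), hpow y hy]
  nlinarith [rpow_nonneg ha.le (c - 1)]

lemma mul_abs_sub_le_abs_rpow_sub_rpow {a x y c : ℝ} (ha : 0 < a) (hax : a ≤ x) (hay : a ≤ y)
    (hc : 1 ≤ c) : a ^ (c - 1) * |x - y| ≤ |x ^ c - y ^ c| := by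
  rcases le_total y x with hyx | hxy
  · have h := mul_sub_le_rpow_sub_rpow ha hay hyx hc
    rwa [abs_of_nonneg (sub_nonneg.2 hyx), abs_of_nonneg ((mul_nonneg (by positivity)
      (sub_nonneg.2 hyx)).trans h)]
  · have h := mul_sub_le_rpow_sub_rpow ha hax hxy hc
    rwa [abs_sub_comm, abs_of_nonneg (sub_nonneg.2 hxy), abs_sub_comm, abs_of_nonneg
      ((mul_nonneg (by positivity) (sub_nonneg.2 hxy)).trans h)]

lemma eventually_one_add_log_le_rpow {ε : ℝ} (hε : 0 < ε) :
    ∀ᶠ X : ℝ in atTop, 1 + log X ≤ (X / 2) ^ ε := by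
  have hlog : (fun X : ℝ => 1 + log X) =o[atTop] fun X => X ^ ε :=
    (isLittleO_const_left.2 <| Or.inr <|
      tendsto_norm_atTop_atTop.comp (tendsto_rpow_atTop hε)).add
      (isLittleO_log_rpow_atTop hε)
  have hhalf : (fun X : ℝ => X ^ ε) =O[atTop] fun X => (X / 2) ^ ε := by
    refine IsBigO.of_bound (2 ^ ε) ?_
    filter_upwards [eventually_ge_atTop 0] with X hX
    rw [norm_of_nonneg (by positivity), norm_of_nonneg (by positivity), div_rpow hX zero_le_two,
      mul_div_cancel₀ _ (by positivity)]
  filter_upwards [(hlog.trans_isBigO hhalf).bound one_pos, eventually_ge_atTop 0]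
    with X hX hX₀
  rw [one_mul, Real.norm_eq_abs, norm_of_nonneg (by positivity)] at hX
  exact (le_abs_self _).trans hX

lemma sum_mul_sum_filter_and_eq {α β R : Type*} [CommSemiring R] (I : Finset α) (s : Finset β)
    (Q : β → Prop) [DecidablePred Q] (rel : α → β → Prop) [∀ d p, Decidable (rel d p)]
    (lam : α → R) (f : β → R) :
    ∑ d ∈ I, lam d * ∑ p ∈ s with Q p ∧ rel d p, f p =
      ∑ p ∈ s with Q p, (∑ d ∈ I with rel d p, lam d) * f p := by
  simp_rw [mul_sum, sum_mul]
  refine sum_comm' fun d p => ?_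
  simp only [mem_filter]
  tauto

theorem integral_norm_sq_sum_dvd_mul_log_mul_fourierChar_rpow_le {c X : ℝ} {N D h : ℕ}
    {S : Finset ℕ} (hc : 1 ≤ c) (hX : 0 < X) (hS : S ⊆ Icc 1 N) (hSX : ∀ p ∈ S, X / 2 < p)
    (hN : harmonic N ≤ (X / 2) ^ (c - 1)) {lam : ℕ → ℂ} (hlam : ∀ d, ‖lam d‖ ≤ 1) :
    ∫ t in (0 : ℝ)..1,
        ‖∑ p ∈ S, (∑ d ∈ Icc 1 D with d ∣ p + h, lam d) * (log p : ℂ) * 𝐞 ((p : ℝ) ^ c * t)‖ ^ 2 ≤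
      2 * (log N ^ 2 * ((N + h) * harmonic D ^ 3)) := by
  have hM : 0 < (X / 2) ^ (c - 1) := by positivity
  have hspacing : ∀ p ∈ S, ∀ q ∈ S,
      (X / 2) ^ (c - 1) * |(p : ℝ) - q| ≤ |(p : ℝ) ^ c - (q : ℝ) ^ c| := fun p hp q hq =>
    mul_abs_sub_le_abs_rpow_sub_rpow (by positivity) (hSX p hp).le (hSX q hq).le hc
  have hfactor : 1 + 2 * harmonic N / (π * (X / 2) ^ (c - 1)) ≤ 2 := by
    have : 2 * harmonic N / (π * (X / 2) ^ (c - 1)) ≤ 1 := by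
      rw [div_le_one (by positivity)]
      nlinarith [pi_gt_three]
    linarith
  refine (integral_norm_sq_sum_fourierChar_le_of_spacing (fun p hp => (mem_Icc.1 (hS hp)).2) _
    (β := fun p : ℕ => (p : ℝ) ^ c) hM hspacing).trans ?_
  gcongr
  exact sum_norm_sq_sum_filter_dvd_mul_log_le D h hS hlam

theorem L_square_integral_unit_interval_general (c : ℝ) (hc1 : 1 < c) :
    ∃ C : ℝ, 0 < C ∧ ∃ X₀ : ℝ, ∀ X : ℝ, X₀ ≤ X →
      ∀ lam : ℕ → ℂ,
        (∀ d : ℕ, ‖lam d‖ ≤ 1) →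
        (∀ d : ℕ, (2 ∣ d ∨ ¬ Squarefree d) → lam d = 0) →
        (∫ t in (0 : ℝ)..1,
            ‖∑ d ∈ Finset.Icc 1 ⌊X ^ ((1 : ℝ) / 11 - 0.001)⌋₊, lam d *
                ∑ p ∈ (Finset.Icc 1 ⌊X⌋₊).filter
                    (fun p : ℕ => p.Prime ∧ X / 2 < (p : ℝ) ∧ d ∣ (p + 2)),
                  Complex.exp (2 * (Real.pi : ℂ) * Complex.I * (((p : ℝ) ^ c * t : ℝ) : ℂ)) *
                    (Real.log p : ℂ)‖ ^ 2) ≤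
          C * X * Real.log X ^ 5 := by
  obtain ⟨X₀, hX₀⟩ := eventually_atTop.1
    ((eventually_ge_atTop 3).and (eventually_one_add_log_le_rpow (sub_pos.2 hc1)))
  refine ⟨32, by norm_num, X₀, fun X hX lam hlam _ => ?_⟩
  obtain ⟨hX3, hlogX⟩ := hX₀ X hX
  set N := ⌊X⌋₊
  set D := ⌊X ^ ((1 : ℝ) / 11 - 0.001)⌋₊
  have hX0 : 0 < X := by linarith
  have hN : (0 : ℝ) < N := by exact_mod_cast Nat.floor_pos.2 (by linarith)
  have hlog1 : 1 ≤ log X := by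
    rw [le_log_iff_exp_le hX0]
    linarith [exp_one_lt_d9]
  have hHD : (harmonic D : ℝ) ≤ 2 * log X :=
    (harmonic_floor_rpow_le (by linarith) (by norm_num) (by norm_num)).trans (by linarith)
  have hHD₀ : (0 : ℝ) ≤ harmonic D := by rw [harmonic_eq_sum_Icc]; push_cast; positivity
  -- swap the sums over `d` and `p`: the integrand becomes `‖∑_{X/2 < p ≤ X} W_p e(p^c t)‖²`
  simp_rw [← and_assoc, sum_mul_sum_filter_and_eq, exp_two_pi_I_mul_eq_fourierChar,
    mul_comm (𝐞 _ : ℂ), ← mul_assoc]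
  calc _ ≤ 2 * (log N ^ 2 * ((N + 2) * harmonic D ^ 3)) :=
        integral_norm_sq_sum_dvd_mul_log_mul_fourierChar_rpow_le hc1.le hX0 (filter_subset _ _)
          (fun p hp => (mem_filter.1 hp).2.2)
          ((harmonic_floor_le_one_add_log X (by linarith)).trans hlogX) hlam
    _ ≤ 2 * (log X ^ 2 * ((2 * X) * (2 * log X) ^ 3)) := by
        gcongr
        · exact Nat.floor_le hX0.le
        · linarith [Nat.floor_le hX0.le]
    _ = 32 * X * log X ^ 5 := by ring

theorem L_square_integral_unit_interval (c : ℝ) (hc1 : 1 < c) (hc2 : c < 832 / 825) :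
    ∃ C : ℝ, 0 < C ∧ ∃ X₀ : ℝ, ∀ X : ℝ, X₀ ≤ X →
      ∀ lam : ℕ → ℂ,
        (∀ d : ℕ, ‖lam d‖ ≤ 1) →
        (∀ d : ℕ, (2 ∣ d ∨ ¬ Squarefree d) → lam d = 0) →
        (∫ t in (0 : ℝ)..1,
            ‖∑ d ∈ Finset.Icc 1 ⌊X ^ ((1 : ℝ) / 11 - 0.001)⌋₊, lam d *
                ∑ p ∈ (Finset.Icc 1 ⌊X⌋₊).filter
                    (fun p : ℕ => p.Prime ∧ X / 2 < (p : ℝ) ∧ d ∣ (p + 2)),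
                  Complex.exp (2 * (Real.pi : ℂ) * Complex.I * (((p : ℝ) ^ c * t : ℝ) : ℂ)) *
                    (Real.log p : ℂ)‖ ^ 2) ≤
          C * X * Real.log X ^ 5 :=
  L_square_integral_unit_interval_general c hc1
end

section
/- Fix c with 1 < c < 832/825. There exists a constant c₁ > 0 (depending on c) such that for all sufficiently large X, for N = 3X^c and any real ϑ with 0 < ϑ < 1, the Lebesgue measure of the set of (y₁, y₂, y₃, y₄) ∈ [X/2, X]⁴ satisfying |y₁^c + y₂^c + y₃^c + y₄^c − N| < 3ϑ/4 is at least c₁ · ϑ · X^{4−c}. -/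
/-!
Fubini in the first coordinate. For `(y₂, y₃, y₄)` in the box `[83X/100, 5X/6]³`, of volume
`(X/300)³`, the remainder `R = 3X^c - ∑ yⱼ^c` lies between `(X/2)^c` and `(99X/100)^c`, so every
`y₁ ∈ [R^{1/c}, R^{1/c} + η]` with `η = ϑ X^{1-c}/8` lies in `[X/2, X]`; on that interval
`0 ≤ y₁^c - R ≤ c X^{c-1} η = cϑ/8 < 3ϑ/4` by Bernoulli's inequality. Hence the set has measure at
least `η (X/300)³ = ϑ X^{4-c} / (8 · 300³)`.
-/

open Real MeasureTheory

open scoped ENNReal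

theorem Real.rpow_sub_rpow_le_mul_rpow_sub_one_mul_sub {a b c : ℝ} (hc : 1 ≤ c) (ha : 0 ≤ a)
    (hab : a ≤ b) : b ^ c - a ^ c ≤ c * b ^ (c - 1) * (b - a) := by
  rcases hab.eq_or_lt with rfl | hab
  · simp
  have hb : 0 < b := ha.trans_lt hab
  have bernoulli := one_add_mul_self_le_rpow_one_add (s := a / b - 1)
    (by linarith [div_nonneg ha hb.le]) hc
  rw [add_sub_cancel, div_rpow ha hb.le, le_div_iff₀ (rpow_pos_of_pos hb c)] at bernoulli
  calc b ^ c - a ^ c ≤ b ^ c - (1 + c * (a / b - 1)) * b ^ c := by linarith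
    _ = c * b ^ (c - 1) * (b - a) := by rw [rpow_sub_one hb.ne']; field_simp; ring

theorem Real.Icc_rpow_inv_subset_abs_rpow_sub_lt {c R η M δ : ℝ} (hc : 1 ≤ c) (hR : 0 ≤ R)
    (hM : R ^ c⁻¹ + η ≤ M) (hδ : c * M ^ (c - 1) * η < δ) :
    Set.Icc (R ^ c⁻¹) (R ^ c⁻¹ + η) ⊆ {t | |t ^ c - R| < δ} := by
  rintro t ⟨ht₀, htη⟩
  set t₀ := R ^ c⁻¹
  have ht₀0 : 0 ≤ t₀ := rpow_nonneg hR _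
  have ht₀c : t₀ ^ c = R := rpow_inv_rpow hR (by positivity)
  have hRt : R ≤ t ^ c := ht₀c ▸ rpow_le_rpow ht₀0 ht₀ (by positivity)
  have htc : t ^ c - R ≤ c * M ^ (c - 1) * η :=
    calc t ^ c - R = t ^ c - t₀ ^ c := by rw [ht₀c]
      _ ≤ c * t ^ (c - 1) * (t - t₀) := rpow_sub_rpow_le_mul_rpow_sub_one_mul_sub hc ht₀0 ht₀
      _ ≤ c * M ^ (c - 1) * η := by
        have ht0 : 0 ≤ t := ht₀0.trans ht₀
        have : t ^ (c - 1) ≤ M ^ (c - 1) := rpow_le_rpow ht0 (by linarith) (by linarith)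
        have hcM : 0 ≤ c * M ^ (c - 1) := mul_nonneg (by linarith) (rpow_nonneg (by linarith) _)
        gcongr
        linarith
  rw [Set.mem_ofPred_eq, abs_of_nonneg (sub_nonneg.2 hRt)]
  linarith

theorem MeasureTheory.Measure.mul_le_prod_apply_of_le_measure_slice {α β : Type*}
    [MeasurableSpace α] [MeasurableSpace β] {μ : Measure α} {ν : Measure β} [SFinite μ]
    [SFinite ν] {s : Set (α × β)} {B : Set β} (hB : MeasurableSet B) {m : ℝ≥0∞}
    (h : ∀ y ∈ B, m ≤ μ {x | (x, y) ∈ s}) : m * ν B ≤ μ.prod ν s := by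
  set t := toMeasurable (μ.prod ν) s
  calc m * ν B = ∫⁻ _ in B, m ∂ν := (setLIntegral_const B m).symm
    _ ≤ ∫⁻ y in B, μ ((fun x => (x, y)) ⁻¹' t) ∂ν :=
      setLIntegral_mono' hB fun y hy =>
        (h y hy).trans (measure_mono fun _ hx => subset_toMeasurable _ _ hx)
    _ ≤ ∫⁻ y, μ ((fun x => (x, y)) ⁻¹' t) ∂ν := setLIntegral_le_lintegral _ _
    _ = μ.prod ν t := (Measure.prod_apply_symm (measurableSet_toMeasurable _ _)).symm
    _ = μ.prod ν s := measure_toMeasurable s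

theorem MeasureTheory.mul_volume_le_volume_of_le_volume_cons {α : Type*} [MeasureSpace α]
    [SigmaFinite (volume : Measure α)] {n : ℕ} {s : Set (Fin (n + 1) → α)}
    {B : Set (Fin n → α)} (hB : MeasurableSet B) {m : ℝ≥0∞}
    (h : ∀ z ∈ B, m ≤ volume {t : α | Fin.cons t z ∈ s}) : m * volume B ≤ volume s := by
  have e := (volume_preserving_piFinSuccAbove (fun _ : Fin (n + 1) => α) 0).symm
  rw [← e.measure_preimage_equiv]
  refine Measure.mul_le_prod_apply_of_le_measure_slice hB fun z hz => ?_
  simpa only [MeasurableEquiv.piFinSuccAbove_symm_apply, Fin.insertNthEquiv_zero, Fin.consEquiv,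
    Equiv.coe_fn_mk, Set.mem_preimage] using h z hz

def cubeNearLevelSet (c X δ : ℝ) : Set (Fin 4 → ℝ) :=
  {y | (∀ i, y i ∈ Set.Icc (X / 2) X) ∧ |(∑ i, y i ^ c) - 3 * X ^ c| < δ}

/-- The box `[83/100, 5/6]` is chosen so that, using `x^2 ≤ x^c ≤ x` on `[0, 1]`,
`3 (1 - 5/6) ≥ 1/2 ≥ (1/2)^c` and `3 (1 - (83/100)^2) ≤ (99/100)^2 ≤ (99/100)^c`. -/
theorem three_mul_rpow_sub_mem_Icc {c X s : ℝ} (hc1 : 1 ≤ c) (hc2 : c ≤ 2)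
    (hX : 0 ≤ X) (hs : s ∈ Set.Icc (3 * (83 / 100 * X) ^ c) (3 * (5 / 6 * X) ^ c)) :
    3 * X ^ c - s ∈ Set.Icc ((X / 2) ^ c) ((99 / 100 * X) ^ c) := by
  have hXc : 0 ≤ X ^ c := rpow_nonneg hX c
  have scale (a : ℝ) (ha : 0 ≤ a) : (a * X) ^ c = a ^ c * X ^ c := mul_rpow ha hX
  have h56 : (5 / 6 : ℝ) ^ c ≤ 5 / 6 := rpow_le_self_of_le_one (by norm_num) (by norm_num) hc1
  have h12 : (1 / 2 : ℝ) ^ c ≤ 1 / 2 := rpow_le_self_of_le_one (by norm_num) (by norm_num) hc1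
  have h83 : (83 / 100 : ℝ) ^ (2 : ℝ) ≤ (83 / 100) ^ c :=
    rpow_le_rpow_of_exponent_ge (by norm_num) (by norm_num) hc2
  have h99 : (99 / 100 : ℝ) ^ (2 : ℝ) ≤ (99 / 100) ^ c :=
    rpow_le_rpow_of_exponent_ge (by norm_num) (by norm_num) hc2
  norm_num at h83 h99
  rw [scale _ (by norm_num), scale _ (by norm_num)] at hs
  obtain ⟨hs₁, hs₂⟩ := hs
  rw [show X / 2 = 1 / 2 * X by ring, scale _ (by norm_num), scale _ (by norm_num)]
  constructor <;> nlinarith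

theorem ofReal_le_volume_slice_cubeNearLevelSet {c X η δ : ℝ} (hc1 : 1 ≤ c) (hc2 : c ≤ 2)
    (hX : 0 ≤ X) (hη : η ≤ X / 100) (hδ : c * X ^ (c - 1) * η < δ) {z : Fin 3 → ℝ}
    (hz : ∀ j, z j ∈ Set.Icc (83 / 100 * X) (5 / 6 * X)) :
    ENNReal.ofReal η ≤ volume {t : ℝ | Fin.cons t z ∈ cubeNearLevelSet c X δ} := by
  have hs : ∑ j, z j ^ c ∈ Set.Icc (3 * (83 / 100 * X) ^ c) (3 * (5 / 6 * X) ^ c) := by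
    have hzc (j : Fin 3) := rpow_le_rpow (by positivity) (hz j).1 (by linarith : 0 ≤ c)
    have hzc' (j : Fin 3) := rpow_le_rpow ((by positivity : 0 ≤ 83 / 100 * X).trans (hz j).1)
      (hz j).2 (by linarith : 0 ≤ c)
    constructor
    · simpa using Finset.card_nsmul_le_sum Finset.univ _ _ fun j _ => hzc j
    · simpa using Finset.sum_le_card_nsmul Finset.univ _ _ fun j _ => hzc' j
  obtain ⟨hR₁, hR₂⟩ := three_mul_rpow_sub_mem_Icc hc1 hc2 hX hs
  have hR : 0 ≤ 3 * X ^ c - ∑ j, z j ^ c := (rpow_nonneg (by positivity) c).trans hR₁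
  have hc0 : 0 < c := by linarith
  have ht₀ := (le_rpow_inv_iff_of_pos (by positivity) hR hc0).2 hR₁
  have ht₀' := (rpow_inv_le_iff_of_pos hR (by positivity) hc0).2 hR₂
  have hsub := Real.Icc_rpow_inv_subset_abs_rpow_sub_lt hc1 hR (by linarith) hδ
  set t₀ := (3 * X ^ c - ∑ j, z j ^ c) ^ c⁻¹
  calc ENNReal.ofReal η = volume (Set.Icc t₀ (t₀ + η)) := by
        rw [Real.volume_Icc, add_sub_cancel_left]
    _ ≤ _ := measure_mono fun t ht => ?_
  refine ⟨Fin.forall_fin_succ.2 ⟨?_, fun j => ?_⟩, ?_⟩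
  · rw [Fin.cons_zero]; constructor <;> linarith [ht.1, ht.2]
  · rw [Fin.cons_succ]; constructor <;> linarith [(hz j).1, (hz j).2]
  · simp only [Fin.sum_univ_succ (n := 3), Fin.cons_zero, Fin.cons_succ]
    have hlevel : |t ^ c - (3 * X ^ c - ∑ j, z j ^ c)| < δ := hsub ht
    rwa [← sub_add, sub_add_eq_add_sub] at hlevel

theorem measure_lower_bound_B (c : ℝ) (hc1 : 1 < c) (hc2 : c < 832 / 825) :
    ∃ c₁ : ℝ, 0 < c₁ ∧ ∃ X₀ : ℝ, ∀ X : ℝ, X₀ ≤ X → ∀ ϑ : ℝ, 0 < ϑ → ϑ < 1 →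
      ENNReal.ofReal (c₁ * ϑ * X ^ (4 - c)) ≤
        volume {y : Fin 4 → ℝ |
          (∀ i, y i ∈ Set.Icc (X / 2) X) ∧
          |(∑ i, y i ^ c) - 3 * X ^ c| < 3 * ϑ / 4} := by
  refine ⟨1 / (8 * 300 ^ 3), by norm_num, 100, fun X hX ϑ hϑ0 hϑ1 => ?_⟩
  have hX0 : 0 < X := by linarith
  set η := ϑ * X ^ (1 - c) / 8 with hη_def
  have hXc : X ^ (1 - c) ≤ 1 := rpow_le_one_of_one_le_of_nonpos (by linarith) (by linarith)
  have hη : η ≤ X / 100 := by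
    have := mul_le_mul hϑ1.le hXc (rpow_nonneg hX0.le _) zero_le_one
    rw [hη_def]
    linarith
  have hδ : c * X ^ (c - 1) * η < 3 * ϑ / 4 := by
    have hcancel : X ^ (c - 1) * X ^ (1 - c) = 1 := by rw [← rpow_add hX0]; norm_num
    have : c * X ^ (c - 1) * η = c * ϑ / 8 := by linear_combination c * ϑ / 8 * hcancel
    nlinarith
  have hX4 : X ^ (4 - c) = X ^ (1 - c) * X ^ 3 := by
    rw [← rpow_natCast, ← rpow_add hX0]; congr 1; push_cast; ring
  set box := Set.univ.pi fun _ : Fin 3 => Set.Icc (83 / 100 * X) (5 / 6 * X)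
  calc ENNReal.ofReal (1 / (8 * 300 ^ 3) * ϑ * X ^ (4 - c)) = ENNReal.ofReal η * volume box := by
        rw [volume_pi_pi, Finset.prod_const, Finset.card_univ, Fintype.card_fin, Real.volume_Icc,
          ← ENNReal.ofReal_pow (by linarith), ← ENNReal.ofReal_mul (by positivity), hX4, hη_def]
        ring_nf
    _ ≤ _ := mul_volume_le_volume_of_le_volume_cons
        (MeasurableSet.univ_pi fun _ => measurableSet_Icc) fun z hz =>
          ofReal_le_volume_slice_cubeNearLevelSet hc1.le (by linarith) hX0.le hη hδ
            (Set.mem_univ_pi.1 hz)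
end
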